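/- arXiv:1807.04238 — 9 statements merged into one kernel-verified Lean document; each statement's English description precedes it below -/
import Mathlib

section
/- Let k, n, m, ℓ be positive integers and let ζ_k = e^{2πi/k}. Let H ∈ BH(n,k) and M ∈ BH(m,ℓ), and let X, Y be subsets of the group ⟨ζ_k⟩ of k-th roots of unity such that every entry of H lies in X and every eigenvalue of m^{-1/2}·M lies in Y. Suppose the pair (H,M) is (X,Y)-sound, i.e.: (1) for every j with ζ_k^j ∈ X, the matrix m^{(1-j)/2}·M^j belongs to BH(m,ℓ); and (2) for every j with ζ_k^j ∈ Y, the entrywise j-th power H^{(j)} belongs to BH(n,k). Choose a function e on the index pairs with H_{ab} = ζ_k^{e(a,b)} for all a,b. Then the mn × mn block matrix H^φ whose (a,b) block is φ(H_{ab}) = m^{(1-e(a,b))/2}·M^{e(a,b)} belongs to BH(mn, ℓ). -/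
/-!
With `U = m^{-1/2} M` unitary, `φ(H_ab) = √m · U^{e(a,b)}`, so the `(a,b)` block of
`H^φ (H^φ)ᴴ` is `m · ∑_c U^{e(a,c)} (U^*)^{e(b,c)}`. For `a = b` every summand is `1`.
For `a ≠ b` this is `f(U)` in the continuous functional calculus of the normal matrix `U`, where
`f(z) = ∑_c z^{e(a,c)} z̄^{e(b,c)}`; at an eigenvalue `z = ζ^j` of `U`, `f(z)` is the `(a,b)`
entry of `H^{(j)} (H^{(j)})ᴴ`, which vanishes by soundness (2). So `f` vanishes on the spectrum
and `f(U) = 0`.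
-/

open Complex

/-- A Butson Hadamard matrix with entries in the `k`-th roots of unity:
every entry is a `k`-th root of unity and `H * Hᴴ = n • 1` where `n` is the order. -/
def IsButson {ι : Type*} [Fintype ι] [DecidableEq ι] (k : ℕ) (H : Matrix ι ι ℂ) : Prop :=
  (∀ i j, H i j ^ k = 1) ∧ H * H.conjTranspose = (Fintype.card ι : ℂ) • 1

open Matrix

theorem sum_pow_mul_star_pow_eq_zero {A : Type*} [CStarAlgebra A] {a : A} [IsStarNormal a]
    {ι : Type*} (s : Finset ι) (p q : ι → ℕ)
    (h : ∀ z ∈ spectrum ℂ a, ∑ i ∈ s, z ^ p i * star z ^ q i = 0) :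
    ∑ i ∈ s, a ^ p i * star a ^ q i = 0 := by
  have hcfc : cfc (fun z : ℂ => ∑ i ∈ s, z ^ p i * star z ^ q i) a =
      ∑ i ∈ s, a ^ p i * star a ^ q i := by
    rw [← Finset.sum_fn, cfc_sum (fun i z => z ^ p i * star z ^ q i) a s]
    refine Finset.sum_congr rfl fun i _ => ?_
    rw [cfc_mul (· ^ p i) (fun z => star z ^ q i) a, cfc_pow_id a, cfc_pow (star ·) _ a,
      cfc_star_id (a := a)]
  rw [← hcfc, cfc_congr (g := 0) h, cfc_zero]

theorem IsButson.sum_mul_star_eq_zero {ι : Type*} [Fintype ι] [DecidableEq ι] {k : ℕ}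
    {H : Matrix ι ι ℂ} (hH : IsButson k H) {a b : ι} (hab : a ≠ b) :
    ∑ c, H a c * star (H b c) = 0 := by
  simpa [mul_apply, one_apply_ne hab] using congrFun (congrFun hH.2 a) b

theorem Matrix.inv_sqrt_smul_mem_unitary {ι : Type*} [Fintype ι] [DecidableEq ι] {m : ℕ}
    (hm : m ≠ 0) {M : Matrix ι ι ℂ} (hM : M * Mᴴ = (m : ℂ) • 1) :
    ((√m : ℂ))⁻¹ • M ∈ unitary (Matrix ι ι ℂ) := by
  refine mem_unitaryGroup_iff.mpr ?_
  rw [star_eq_conjTranspose, conjTranspose_smul, smul_mul, Matrix.mul_smul, hM, smul_smul,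
    smul_smul, ← ofReal_inv, star_def, conj_ofReal, ← ofReal_mul,
    ← mul_inv, Real.mul_self_sqrt m.cast_nonneg, ofReal_inv, ofReal_natCast,
    inv_mul_cancel₀ (Nat.cast_ne_zero.mpr hm), one_smul]

theorem zpow_one_sub_smul_pow {𝕜 A : Type*} [Field 𝕜] [Ring A] [Algebra 𝕜 A] {s : 𝕜}
    (hs : s ≠ 0) (M : A) (j : ℕ) : s ^ ((1 : ℤ) - j) • M ^ j = s • (s⁻¹ • M) ^ j := by
  rw [smul_pow, smul_smul, inv_pow, zpow_sub₀ hs, zpow_one, zpow_natCast, div_eq_mul_inv]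

theorem Matrix.comp_conjTranspose {I K R : Type*} [Star R] (F : Matrix I I (Matrix K K R)) :
    (comp I I K K R F)ᴴ = comp I I K K R Fᴴ := rfl

theorem of_pow_mul_conjTranspose_of_mem_unitary {A : Type*} [CStarAlgebra A] {U : A}
    (hU : U ∈ unitary A) {ι : Type*} [Fintype ι] [DecidableEq ι] (e : ι → ι → ℕ)
    (horth : ∀ a b, a ≠ b → ∀ z ∈ spectrum ℂ U, ∑ c, z ^ e a c * star z ^ e b c = 0) :
    of (fun a b => U ^ e a b) * (of fun a b => U ^ e a b)ᴴ = (Fintype.card ι : ℂ) • 1 := by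
  have : IsStarNormal U := isStarNormal_of_mem_unitary hU
  ext a b
  simp only [mul_apply, conjTranspose_apply, of_apply, star_pow]
  by_cases hab : a = b
  · subst hab
    simp [Unitary.mul_star_self_of_mem (pow_mem hU _), ← star_pow, Nat.cast_smul_eq_nsmul]
  · rw [sum_pow_mul_star_pow_eq_zero _ _ _ (horth a b hab)]
    simp [one_apply_ne hab]

theorem stmt_0_general (n m k l : ℕ) (hm : 0 < m)
    (ζ : ℂ)
    (X Y : Set ℂ)
    (hY : Y ⊆ {z : ℂ | ∃ j : ℕ, z = ζ ^ j})
    (H : Matrix (Fin n) (Fin n) ℂ) (M : Matrix (Fin m) (Fin m) ℂ)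
    (hM : IsButson l M)
    -- every entry of `H` lies in `X`
    (hHX : ∀ a b, H a b ∈ X)
    -- every eigenvalue of `m^{-1/2} • M` lies in `Y`
    (hMY : spectrum ℂ (((Real.sqrt m : ℂ))⁻¹ • M) ⊆ Y)
    -- soundness condition (1): for `ζ^j ∈ X`, `m^{(1-j)/2} • M^j ∈ BH(m, l)`
    (sound₁ : ∀ j : ℕ, ζ ^ j ∈ X →
      IsButson l (((Real.sqrt m : ℂ) ^ ((1 : ℤ) - (j : ℤ))) • M ^ j))
    -- soundness condition (2): for `ζ^j ∈ Y`, the entrywise power `H^{(j)} ∈ BH(n, k)`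
    (sound₂ : ∀ j : ℕ, ζ ^ j ∈ Y →
      IsButson k (fun a b => H a b ^ j))
    -- a choice of exponents: `H a b = ζ ^ e a b`
    (e : Fin n → Fin n → ℕ) (he : ∀ a b, H a b = ζ ^ e a b) :
    IsButson l (fun p q : Fin n × Fin m =>
      ((((Real.sqrt m : ℂ) ^ ((1 : ℤ) - (e p.1 q.1 : ℤ))) • M ^ (e p.1 q.1)) p.2 q.2)) := by
  set s : ℂ := (√m : ℂ)
  have hs : s ≠ 0 := by simp [s, hm.ne']
  have hU : s⁻¹ • M ∈ unitary (Matrix (Fin m) (Fin m) ℂ) :=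
    inv_sqrt_smul_mem_unitary hm.ne' (by rw [hM.2, Fintype.card_fin])
  have horth : ∀ a b, a ≠ b → ∀ z ∈ spectrum ℂ (s⁻¹ • M),
      ∑ c, z ^ e a c * star z ^ e b c = 0 := by
    intro a b hab z hz
    obtain ⟨j, rfl⟩ := hY (hMY hz)
    simpa [he, star_pow, ← pow_mul, mul_comm j] using
      (sound₂ j (hMY hz)).sum_mul_star_eq_zero hab
  set F : Matrix (Fin n) (Fin n) (Matrix (Fin m) (Fin m) ℂ) :=
    of fun a b => s ^ ((1 : ℤ) - e a b) • M ^ e a b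
  have hblocks : F = s • of (fun a b => (s⁻¹ • M) ^ e a b) := by
    ext1 a b
    exact zpow_one_sub_smul_pow hs M (e a b)
  refine ⟨fun p q => (sound₁ _ (he p.1 q.1 ▸ hHX p.1 q.1)).1 p.2 q.2, ?_⟩
  change comp _ _ _ _ _ F * (comp _ _ _ _ _ F)ᴴ = _
  open scoped Matrix.Norms.L2Operator in
  rw [comp_conjTranspose, ← compAlgEquiv_apply _ _ _ ℂ, ← compAlgEquiv_apply _ _ _ ℂ,
    ← map_mul, hblocks, conjTranspose_smul, smul_mul_smul_comm,
    of_pow_mul_conjTranspose_of_mem_unitary hU e horth]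
  have hnorm : s * star s = m := by
    rw [star_def, mul_conj, normSq_ofReal, Real.mul_self_sqrt m.cast_nonneg, ofReal_natCast]
  rw [hnorm, smul_smul, map_smul, map_one, Fintype.card_prod, Fintype.card_fin, Fintype.card_fin,
    Nat.cast_mul, mul_comm]

theorem stmt_0 (n m k l : ℕ) (hn : 0 < n) (hm : 0 < m) (hk : 0 < k) (hl : 0 < l)
    (ζ : ℂ) (hζ : ζ = Complex.exp (2 * Real.pi * Complex.I / k))
    (X Y : Set ℂ)
    (hX : X ⊆ {z : ℂ | ∃ j : ℕ, z = ζ ^ j})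
    (hY : Y ⊆ {z : ℂ | ∃ j : ℕ, z = ζ ^ j})
    (H : Matrix (Fin n) (Fin n) ℂ) (M : Matrix (Fin m) (Fin m) ℂ)
    (hH : IsButson k H) (hM : IsButson l M)
    -- every entry of `H` lies in `X`
    (hHX : ∀ a b, H a b ∈ X)
    -- every eigenvalue of `m^{-1/2} • M` lies in `Y`
    (hMY : spectrum ℂ (((Real.sqrt m : ℂ))⁻¹ • M) ⊆ Y)
    -- soundness condition (1): for `ζ^j ∈ X`, `m^{(1-j)/2} • M^j ∈ BH(m, l)`
    (sound₁ : ∀ j : ℕ, ζ ^ j ∈ X →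
      IsButson l (((Real.sqrt m : ℂ) ^ ((1 : ℤ) - (j : ℤ))) • M ^ j))
    -- soundness condition (2): for `ζ^j ∈ Y`, the entrywise power `H^{(j)} ∈ BH(n, k)`
    (sound₂ : ∀ j : ℕ, ζ ^ j ∈ Y →
      IsButson k (fun a b => H a b ^ j))
    -- a choice of exponents: `H a b = ζ ^ e a b`
    (e : Fin n → Fin n → ℕ) (he : ∀ a b, H a b = ζ ^ e a b) :
    IsButson l (fun p q : Fin n × Fin m =>
      ((((Real.sqrt m : ℂ) ^ ((1 : ℤ) - (e p.1 q.1 : ℤ))) • M ^ (e p.1 q.1)) p.2 q.2)) :=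
  stmt_0_general n m k l hm ζ X Y hY H M hM hHX hMY sound₁ sound₂ e he
end

section
/- Let t ≥ 2 be an integer and n a positive integer. If there exists a Butson Hadamard matrix in BH(n, 2^t), then there exists a real Hadamard matrix of order 2^{2^{t-1}-1}·n. -/
/-- A real Hadamard matrix: entries in `{±1}` and `H * Hᵀ = n • 1`. -/
def IsHadamard {ι : Type*} [Fintype ι] [DecidableEq ι] (H : Matrix ι ι ℝ) : Prop :=
  (∀ i j, H i j = 1 ∨ H i j = -1) ∧ H * H.transpose = (Fintype.card ι : ℝ) • 1

/-!
Let `d = 2 ^ (t - 1)` and let `ζ` be a primitive `2 ^ t`-th root of unity, whose minimal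
polynomial over `ℚ` is `X ^ d + 1`. The `d × d` negacyclic shift `N` satisfies `N ^ d = -1`, so
every rational polynomial relation between powers of `ζ` also holds for `N`; as `N` is
orthogonal, `(N ^ e)ᵀ` plays the role of `conj (ζ ^ e) = ζ ^ (-e)`. Writing the entries of
`H ∈ BH(n, 2 ^ t)` as `ζ ^ e` and replacing each one by the block `A * N ^ e`, with `A` a
Sylvester Hadamard matrix of order `d`, therefore gives a `±1` matrix (`N` is a signed
permutation) whose Gram matrix is read off from `H * Hᴴ = n • 1`: a Hadamard matrix of order
`d * n`. A Kronecker product with a Sylvester matrix raises the order to `2 ^ (d - 1) * n`.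
-/

open Polynomial
open scoped Matrix

variable {ι κ : Type*}

section Hadamard

variable [Fintype ι] [DecidableEq ι] [Fintype κ] [DecidableEq κ]

theorem isHadamard_iff_matrix_isHadamard {A : Matrix ι ι ℝ} : IsHadamard A ↔ A.IsHadamard := by
  rcases isEmpty_or_nonempty ι with hι | hι
  · exact iff_of_true ⟨isEmptyElim, Subsingleton.elim _ _⟩
      ⟨isEmptyElim, Subsingleton.elim _ _, Subsingleton.elim _ _⟩
  rw [Matrix.isHadamard_iff_mul_conjTranspose (.of_ne_zero (by positivity)),
    Matrix.conjTranspose_eq_transpose_of_trivial]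
  simp only [Unitary.mem_iff_eq_one_or_eq_neg_one, IsHadamard]

theorem exists_isHadamard_of_card_eq {R : Type*} [Semiring R] [StarRing R]
    (h : Fintype.card ι = Fintype.card κ) (hA : ∃ A : Matrix ι ι R, A.IsHadamard) :
    ∃ B : Matrix κ κ R, B.IsHadamard :=
  let e := Fintype.equivOfCardEq h
  let ⟨_, hA⟩ := hA
  ⟨_, hA.reindex e e⟩

theorem isHadamard_one_one_one_neg_one : IsHadamard !![(1 : ℝ), 1; 1, -1] := by
  refine ⟨fun i j ↦ by fin_cases i <;> fin_cases j <;> simp, ?_⟩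
  ext i j
  fin_cases i <;> fin_cases j <;> norm_num [Matrix.mul_apply, Matrix.one_apply]

theorem exists_isHadamard_two_pow (r : ℕ) :
    ∃ A : Matrix (Fin (2 ^ r)) (Fin (2 ^ r)) ℝ, A.IsHadamard := by
  induction r with
  | zero =>
    rw [pow_zero]
    refine ⟨1, isHadamard_iff_matrix_isHadamard.1 ⟨fun i j ↦ ?_, by simp⟩⟩
    simp [Matrix.one_apply, Subsingleton.elim i j]
  | succ r ih =>
    obtain ⟨A, hA⟩ := ih
    refine exists_isHadamard_of_card_eq (ι := Fin 2 × Fin (2 ^ r)) (by simp [pow_succ']) ⟨_,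
      (isHadamard_iff_matrix_isHadamard.1 isHadamard_one_one_one_neg_one).kronecker hA⟩

end Hadamard

namespace Matrix

variable {α : Type*} [DecidableEq κ]

def monomialMatrix [Zero α] (σ : κ → κ) (s : κ → α) : Matrix κ κ α :=
  of fun x y ↦ if x = σ y then s y else 0

theorem mul_monomialMatrix_apply [Fintype κ] [NonUnitalNonAssocSemiring α] (A : Matrix ι κ α)
    (σ : κ → κ) (s : κ → α) (i : ι) (y : κ) : (A * monomialMatrix σ s) i y = A i (σ y) * s y := by
  simp [mul_apply, monomialMatrix]

theorem monomialMatrix_mul_monomialMatrix [Fintype κ] [NonUnitalNonAssocSemiring α] (σ τ : κ → κ)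
    (s r : κ → α) :
    monomialMatrix σ s * monomialMatrix τ r = monomialMatrix (σ ∘ τ) (fun y ↦ s (τ y) * r y) := by
  ext x y
  rw [mul_monomialMatrix_apply]
  simp only [monomialMatrix, of_apply, Function.comp_apply]
  split_ifs <;> simp_all

theorem monomialMatrix_id [Zero α] (s : κ → α) : monomialMatrix id s = diagonal s := by
  ext x y
  simp +contextual [monomialMatrix, diagonal_apply]

theorem transpose_monomialMatrix_mul_self [Fintype κ] [NonAssocSemiring α] {σ : κ → κ}
    (hσ : Function.Injective σ) {s : κ → α} (hs : ∀ y, s y * s y = 1) :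
    (monomialMatrix σ s)ᵀ * monomialMatrix σ s = 1 := by
  ext x y
  rw [mul_monomialMatrix_apply]
  by_cases h : x = y
  · simp [monomialMatrix, h, hs, one_apply]
  · simp [monomialMatrix, hσ.eq_iff, h, Ne.symm h]

theorem mul_monomialMatrix_apply_eq_one_or [Fintype κ] {A : Matrix ι κ ℝ}
    (hA : ∀ i j, A i j = 1 ∨ A i j = -1) (σ : κ → κ) {s : κ → ℝ} (hs : ∀ y, s y = 1 ∨ s y = -1)
    (i : ι) (y : κ) :
    (A * monomialMatrix σ s) i y = 1 ∨ (A * monomialMatrix σ s) i y = -1 := by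
  rw [mul_monomialMatrix_apply]
  rcases hA i (σ y) with h | h <;> rcases hs y with h' | h' <;> simp [h, h']

theorem transpose_pow_eq_pow_pred [Fintype κ] {R : Type*} [CommRing R] {N : Matrix κ κ R}
    (hNT : Nᵀ * N = 1) {q : ℕ} (hq : q ≠ 0) (hNq : N ^ q = 1) (b : ℕ) :
    (N ^ b)ᵀ = (N ^ b) ^ (q - 1) := by
  have hT : Nᵀ = N ^ (q - 1) :=
    calc Nᵀ = Nᵀ * N * N ^ (q - 1) := by
          rw [mul_assoc, ← pow_succ', Nat.sub_add_cancel (Nat.pos_of_ne_zero hq), hNq, mul_one]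
      _ = N ^ (q - 1) := by rw [hNT, one_mul]
  rw [transpose_pow, hT, ← pow_mul, ← pow_mul, mul_comm]

end Matrix

open Matrix hiding IsHadamard

/-- The `a`-th power of the negacyclic shift `e y ↦ e (y + 1)`, `e (d - 1) ↦ -e 0` of `Fin d`. -/
def negacyclic (d : ℕ) [NeZero d] (a : ℕ) : Matrix (Fin d) (Fin d) ℝ :=
  monomialMatrix (fun y ↦ Fin.ofNat d (y + a)) (fun y ↦ (-1) ^ ((y + a) / d))

section Negacyclic

variable {d : ℕ} [NeZero d]

theorem negacyclic_add (a b : ℕ) : negacyclic d (a + b) = negacyclic d a * negacyclic d b := by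
  rw [negacyclic, negacyclic, negacyclic, monomialMatrix_mul_monomialMatrix]
  congr 1
  · ext y
    simp only [Function.comp_apply, Fin.val_ofNat, Nat.mod_add_mod]
    ring_nf
  · ext y
    simp only [Fin.val_ofNat, ← pow_add]
    congr 1
    have hsplit : (y : ℕ) + (a + b) = (y + b) % d + a + d * ((y + b) / d) := by
      have := Nat.mod_add_div (y + b) d
      omega
    rw [hsplit, Nat.add_mul_div_left _ _ (Nat.pos_of_neZero d)]

theorem negacyclic_zero : negacyclic d 0 = 1 := by
  have : (fun y : Fin d ↦ Fin.ofNat d (y + 0)) = id := by ext y; simp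
  rw [negacyclic, this, monomialMatrix_id, ← diagonal_one]
  congr
  ext y
  simp [Nat.div_eq_of_lt y.isLt]

theorem negacyclic_self : negacyclic d d = -1 := by
  have : (fun y : Fin d ↦ Fin.ofNat d (y + d)) = id := by ext y; simp [Nat.mod_eq_of_lt y.isLt]
  rw [negacyclic, this, monomialMatrix_id, ← diagonal_one, diagonal_neg]
  congr
  ext y
  simp [Nat.add_div_right _ (Nat.pos_of_neZero d), Nat.div_eq_of_lt y.isLt]

theorem negacyclic_one_pow (a : ℕ) : negacyclic d 1 ^ a = negacyclic d a := by
  induction a with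
  | zero => rw [pow_zero, negacyclic_zero]
  | succ a ih => rw [pow_succ, ih, negacyclic_add]

theorem transpose_negacyclic_mul_self (a : ℕ) : (negacyclic d a)ᵀ * negacyclic d a = 1 := by
  refine transpose_monomialMatrix_mul_self (fun y y' h ↦ ?_) fun y ↦ ?_
  · have h' : (y + a) % d = (y' + a) % d := by simpa using congrArg Fin.val h
    have := Nat.ModEq.add_right_cancel' a h'
    rwa [Nat.ModEq, Nat.mod_eq_of_lt y.isLt, Nat.mod_eq_of_lt y'.isLt, ← Fin.ext_iff] at this
  · rw [← pow_add, ← two_mul, pow_mul]; simp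

theorem mul_negacyclic_apply_eq_one_or {A : Matrix ι (Fin d) ℝ}
    (hA : ∀ i j, A i j = 1 ∨ A i j = -1) (a : ℕ) (i : ι) (y : Fin d) :
    (A * negacyclic d a) i y = 1 ∨ (A * negacyclic d a) i y = -1 :=
  mul_monomialMatrix_apply_eq_one_or hA _ (fun _ ↦ neg_one_pow_eq_or ℝ _) i y

end Negacyclic

theorem Complex.conj_eq_pow_pred {ζ : ℂ} {q : ℕ} (hq : q ≠ 0) (h : ζ ^ q = 1) :
    starRingEnd ℂ ζ = ζ ^ (q - 1) := by
  rw [← Complex.inv_eq_conj (Complex.norm_eq_one_of_pow_eq_one h hq)]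
  refine inv_eq_of_mul_eq_one_right ?_
  rw [← pow_succ', Nat.sub_add_cancel (Nat.pos_of_ne_zero hq), h]

theorem IsPrimitiveRoot.minpoly_rat_eq_X_pow_add_one {K : Type*} [Field K] [CharZero K] {ζ : K}
    {t : ℕ} (hζ : IsPrimitiveRoot ζ (2 ^ (t + 1))) : minpoly ℚ ζ = X ^ 2 ^ t + 1 := by
  rw [← cyclotomic_eq_minpoly_rat hζ (by positivity),
    cyclotomic_prime_pow_eq_geom_sum Nat.prime_two]
  simp [Finset.sum_range_succ, add_comm]

section Butson

variable [Fintype ι] [DecidableEq ι] [Fintype κ] [DecidableEq κ]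

theorem IsButson.sum_mul_pow_pred {q : ℕ} (hq : q ≠ 0) {H : Matrix ι ι ℂ} (hH : IsButson q H)
    (i j : ι) : ∑ k, H i k * H j k ^ (q - 1) = if i = j then (Fintype.card ι : ℂ) else 0 := by
  have := congrFun (congrFun hH.2 i) j
  simpa [mul_apply, one_apply, Complex.conj_eq_pow_pred hq (hH.1 j _)] using this

theorem IsButson.sum_pow_mul_pow_pred {t : ℕ} {H : Matrix ι ι ℂ} (hH : IsButson (2 ^ (t + 1)) H)
    {ζ : ℂ} (hζ : IsPrimitiveRoot ζ (2 ^ (t + 1))) {e : ι → ι → ℕ} (he : ∀ i j, ζ ^ e i j = H i j)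
    {R : Type*} [Ring R] [Algebra ℚ R] {N : R} (hN : N ^ 2 ^ t = -1) (i j : ι) :
    ∑ k, N ^ e i k * (N ^ e j k) ^ (2 ^ (t + 1) - 1) =
      if i = j then (Fintype.card ι : R) else 0 := by
  let p : ℚ[X] := ∑ k, X ^ e i k * (X ^ e j k) ^ (2 ^ (t + 1) - 1) -
    C ((if i = j then Fintype.card ι else 0 : ℕ) : ℚ)
  have hζp : aeval ζ p = 0 := by
    simp only [p, map_sub, map_sum, map_mul, map_pow, aeval_X, aeval_C, he,
      hH.sum_mul_pow_pred (by positivity)]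
    split_ifs <;> simp
  have hNp : aeval N p = 0 := aeval_eq_zero_of_dvd_aeval_eq_zero (minpoly.dvd ℚ ζ hζp)
    (by simp [hζ.minpoly_rat_eq_X_pow_add_one, hN])
  simp only [p, map_sub, map_sum, map_mul, map_pow, aeval_X, aeval_C, sub_eq_zero] at hNp
  rw [hNp]
  split_ifs <;> simp

theorem isHadamard_comp {B : Matrix ι ι (Matrix κ κ ℝ)}
    (hB : ∀ i k x z, B i k x z = 1 ∨ B i k x z = -1)
    (horth : ∀ i j, ∑ k, B i k * (B j k)ᵀ =
      if i = j then (Fintype.card (ι × κ) : Matrix κ κ ℝ) else 0) :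
    IsHadamard (comp ι ι κ κ ℝ B) := by
  refine ⟨fun _ _ ↦ hB _ _ _ _, ?_⟩
  ext ⟨i, x⟩ ⟨j, y⟩
  have := congrFun (congrFun (horth i j) x) y
  simp only [Matrix.sum_apply, mul_apply, transpose_apply, apply_ite (fun M : Matrix κ κ ℝ ↦ M x y),
    Matrix.natCast_apply, Matrix.zero_apply] at this
  simp only [mul_apply, Fintype.sum_prod_type, transpose_apply, comp_apply, this,
    Matrix.smul_apply, Matrix.one_apply, Prod.mk.injEq]
  split_ifs <;> simp_all

theorem IsButson.exists_isHadamard_prod_of_pow_eq_neg_one {t : ℕ} {H : Matrix ι ι ℂ}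
    (hH : IsButson (2 ^ (t + 1)) H) {A : Matrix κ κ ℝ} (hA : IsHadamard A) {N : Matrix κ κ ℝ}
    (hN : N ^ 2 ^ t = -1) (hNT : Nᵀ * N = 1)
    (hAN : ∀ a x y, (A * N ^ a) x y = 1 ∨ (A * N ^ a) x y = -1) :
    ∃ M : Matrix (ι × κ) (ι × κ) ℝ, IsHadamard M := by
  have hq : 2 ^ (t + 1) ≠ 0 := by positivity
  have : NeZero (2 ^ (t + 1)) := ⟨hq⟩
  have hζ := Complex.isPrimitiveRoot_exp _ hq
  choose e _ he using fun i j ↦ hζ.eq_pow_of_pow_eq_one (hH.1 i j)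
  have hNq : N ^ 2 ^ (t + 1) = 1 := by rw [pow_succ, pow_mul, hN, neg_one_sq]
  refine ⟨comp _ _ _ _ _ (of fun i k ↦ A * N ^ e i k),
    isHadamard_comp (fun i k ↦ hAN _) fun i j ↦ ?_⟩
  calc ∑ k, A * N ^ e i k * (A * N ^ e j k)ᵀ
      = A * (∑ k, N ^ e i k * (N ^ e j k) ^ (2 ^ (t + 1) - 1)) * Aᵀ := by
        simp [transpose_mul, transpose_pow_eq_pow_pred hNT hq hNq, Matrix.mul_assoc,
          Finset.mul_sum, Finset.sum_mul]
    _ = _ := by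
        rw [hH.sum_pow_mul_pow_pred hζ he hN]
        split_ifs
        · rw [Matrix.mul_assoc, Nat.cast_comm, ← Matrix.mul_assoc, hA.2, Nat.cast_smul_eq_nsmul,
            nsmul_one, ← Nat.cast_mul, Fintype.card_prod, mul_comm]
        · simp

theorem IsButson.exists_isHadamard_prod_fin_two_pow {t : ℕ} {H : Matrix ι ι ℂ}
    (hH : IsButson (2 ^ (t + 1)) H) :
    ∃ M : Matrix (ι × Fin (2 ^ t)) (ι × Fin (2 ^ t)) ℝ, IsHadamard M := by
  obtain ⟨A, hA⟩ := exists_isHadamard_two_pow t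
  rw [← isHadamard_iff_matrix_isHadamard] at hA
  refine hH.exists_isHadamard_prod_of_pow_eq_neg_one hA (N := negacyclic (2 ^ t) 1)
    (by rw [negacyclic_one_pow, negacyclic_self]) (transpose_negacyclic_mul_self 1) fun a ↦ ?_
  rw [negacyclic_one_pow]
  exact mul_negacyclic_apply_eq_one_or hA.1 a

end Butson

theorem stmt_2_general (t n : ℕ) (ht : 2 ≤ t)
    (h : ∃ H : Matrix (Fin n) (Fin n) ℂ, IsButson (2 ^ t) H) :
    ∃ M : Matrix (Fin (2 ^ (2 ^ (t - 1) - 1) * n)) (Fin (2 ^ (2 ^ (t - 1) - 1) * n)) ℝ,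
      IsHadamard M := by
  obtain ⟨s, rfl⟩ : ∃ s, t = s + 1 := ⟨t - 1, by omega⟩
  obtain ⟨H, hH⟩ := h
  obtain ⟨M, hM⟩ := hH.exists_isHadamard_prod_fin_two_pow
  obtain ⟨S, hS⟩ := exists_isHadamard_two_pow (2 ^ s - 1 - s)
  simp only [isHadamard_iff_matrix_isHadamard] at hM ⊢
  refine exists_isHadamard_of_card_eq ?_ ⟨_, hS.kronecker hM⟩
  have : s < 2 ^ s := Nat.lt_two_pow_self
  simp only [Fintype.card_prod, Fintype.card_fin, add_tsub_cancel_right]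
  rw [mul_left_comm, ← pow_add, mul_comm]
  congr 2
  omega

theorem stmt_2 (t n : ℕ) (ht : 2 ≤ t) (hn : 0 < n)
    (h : ∃ H : Matrix (Fin n) (Fin n) ℂ, IsButson (2 ^ t) H) :
    ∃ M : Matrix (Fin (2 ^ (2 ^ (t - 1) - 1) * n)) (Fin (2 ^ (2 ^ (t - 1) - 1) * n)) ℝ,
      IsHadamard M :=
  stmt_2_general t n ht h
end

section
/- If there exists a Butson Hadamard matrix in BH(n,4), then there exists a real Hadamard matrix of order 2n. -/
/-!
Write `H = A + i B` with `A, B` real. Since the entries of `H` lie in `{±1, ±i}`, the matrices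
`A + B` and `A - B` have entries `±1`. Taking real and imaginary parts of `H Hᴴ = n I` gives
`A Aᵀ + B Bᵀ = n I` and `A Bᵀ = B Aᵀ`, which is exactly what makes the rows of the block matrix
`[[A + B, A - B], [A - B, -(A + B)]]` orthogonal of squared length `2n`.
-/

open Complex
open scoped Matrix

theorem Complex.eq_one_or_neg_one_or_I_or_neg_I_of_pow_four_eq_one {z : ℂ} (hz : z ^ 4 = 1) :
    z = 1 ∨ z = -1 ∨ z = I ∨ z = -I := by
  have : (z - 1) * (z + 1) * (z - I) * (z + I) = 0 := by
    linear_combination hz - (z ^ 2 - 1) * I_sq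
  simpa [sub_eq_zero, add_eq_zero_iff_eq_neg, or_assoc] using this

theorem Complex.re_add_im_and_re_sub_im_of_pow_four_eq_one {z : ℂ} (hz : z ^ 4 = 1) :
    (z.re + z.im = 1 ∨ z.re + z.im = -1) ∧ (z.re - z.im = 1 ∨ z.re - z.im = -1) := by
  rcases eq_one_or_neg_one_or_I_or_neg_I_of_pow_four_eq_one hz with rfl | rfl | rfl | rfl <;>
    norm_num

namespace Matrix

variable {m n : Type*} [Fintype n]

theorem map_re_mul_conjTranspose (H : Matrix m n ℂ) :
    (H * Hᴴ).map re = H.map re * (H.map re)ᵀ + H.map im * (H.map im)ᵀ := by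
  ext i j
  simp [mul_apply, re_sum, mul_re, Finset.sum_add_distrib]

theorem map_im_mul_conjTranspose (H : Matrix m n ℂ) :
    (H * Hᴴ).map im = H.map im * (H.map re)ᵀ - H.map re * (H.map im)ᵀ := by
  ext i j
  simp only [map_apply, mul_apply, im_sum, sub_apply, ← Finset.sum_sub_distrib]
  refine Finset.sum_congr rfl fun k _ => ?_
  simp [mul_im]
  ring

def plusMinusBlocks {R : Type*} [Ring R] (A B : Matrix m n R) :
    Matrix (m ⊕ m) (n ⊕ n) R :=
  fromBlocks (A + B) (A - B) (A - B) (-(A + B))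

theorem plusMinusBlocks_mul_transpose {R : Type*} [CommRing R] (A B : Matrix m n R)
    (hAB : A * Bᵀ = B * Aᵀ) :
    plusMinusBlocks A B * (plusMinusBlocks A B)ᵀ =
      fromBlocks (2 • (A * Aᵀ + B * Bᵀ)) 0 0 (2 • (A * Aᵀ + B * Bᵀ)) := by
  simp only [plusMinusBlocks, fromBlocks_transpose, fromBlocks_multiply, transpose_add,
    transpose_sub, transpose_neg, Matrix.add_mul, Matrix.sub_mul, Matrix.mul_add, Matrix.mul_sub,
    Matrix.neg_mul, Matrix.mul_neg, hAB]
  congr 1 <;> abel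

theorem plusMinusBlocks_mul_transpose_eq_smul_one {R : Type*} [CommRing R] [DecidableEq m]
    {A B : Matrix m n R} {c : R} (hAB : A * Bᵀ = B * Aᵀ) (hc : A * Aᵀ + B * Bᵀ = c • 1) :
    plusMinusBlocks A B * (plusMinusBlocks A B)ᵀ = (2 * c) • 1 := by
  rw [plusMinusBlocks_mul_transpose A B hAB, hc, ← fromBlocks_one, fromBlocks_smul]
  simp [two_mul, add_smul, two_nsmul]

end Matrix

theorem IsHadamard.reindex {l m : Type*} [Fintype l] [DecidableEq l] [Fintype m] [DecidableEq m]
    {M : Matrix l l ℝ} (hM : IsHadamard M) (e : l ≃ m) : IsHadamard (Matrix.reindex e e M) := by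
  refine ⟨fun i j => hM.1 _ _, ?_⟩
  simp [Matrix.reindex_apply, Matrix.submatrix_mul_equiv, hM.2,
    Matrix.submatrix_smul, Fintype.card_congr e, Pi.smul_apply]

theorem IsButson.isHadamard_plusMinusBlocks_re_im {ι : Type*} [Fintype ι] [DecidableEq ι]
    {H : Matrix ι ι ℂ} (hH : IsButson 4 H) :
    IsHadamard ((H.map re).plusMinusBlocks (H.map im)) := by
  obtain ⟨hroot, hprod⟩ := hH
  have hre : H.map re * (H.map re)ᵀ + H.map im * (H.map im)ᵀ = (Fintype.card ι : ℝ) • 1 := by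
    rw [← Matrix.map_re_mul_conjTranspose, hprod]
    ext i j
    by_cases hij : i = j <;> simp [hij]
  have him : H.map re * (H.map im)ᵀ = H.map im * (H.map re)ᵀ := by
    refine (sub_eq_zero.mp ?_).symm
    rw [← Matrix.map_im_mul_conjTranspose, hprod]
    ext i j
    by_cases hij : i = j <;> simp [hij]
  constructor
  · rintro (i | i) (j | j) <;>
      obtain ⟨hadd, hsub⟩ := re_add_im_and_re_sub_im_of_pow_four_eq_one (hroot i j) <;>
      simp only [Matrix.plusMinusBlocks, Matrix.fromBlocks_apply₁₁, Matrix.fromBlocks_apply₁₂,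
        Matrix.fromBlocks_apply₂₁, Matrix.fromBlocks_apply₂₂, Matrix.add_apply, Matrix.sub_apply,
        Matrix.neg_apply, Matrix.map_apply] <;> grind
  · rw [Matrix.plusMinusBlocks_mul_transpose_eq_smul_one him hre, Fintype.card_sum]
    push_cast
    ring_nf

theorem stmt_3_general (n : ℕ)
    (h : ∃ H : Matrix (Fin n) (Fin n) ℂ, IsButson 4 H) :
    ∃ M : Matrix (Fin (2 * n)) (Fin (2 * n)) ℝ, IsHadamard M := by
  obtain ⟨H, hH⟩ := h
  exact ⟨_, hH.isHadamard_plusMinusBlocks_re_im.reindex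
    (finSumFinEquiv.trans (finCongr (two_mul n).symm))⟩

theorem stmt_3 (n : ℕ) (hn : 0 < n)
    (h : ∃ H : Matrix (Fin n) (Fin n) ℂ, IsButson 4 H) :
    ∃ M : Matrix (Fin (2 * n)) (Fin (2 * n)) ℝ, IsHadamard M :=
  stmt_3_general n h
end

section
/- Let n be a positive integer, let u, v ∈ F_2^n and let L ∈ GL_n(F_2). Set P = D_u·T_v·ρ(L) and Q = D_v·T_u·ρ((L^{-1})ᵀ). Then P·S_n·Qᵀ = (-1)^{⟨u,v⟩}·S_n. -/
/-- The sign `(-1)^x` attached to an element `x ∈ F₂`. -/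
def sgn (x : ZMod 2) : ℝ := (-1 : ℝ) ^ x.val

/-- The standard bilinear form `⟨a, b⟩ = aᵀ b` on `F₂ⁿ`. -/
def bform {n : ℕ} (a b : Fin n → ZMod 2) : ZMod 2 := ∑ i, a i * b i

/-- The Sylvester matrix of order `2^n`, with rows and columns indexed by `F₂ⁿ`,
whose `(a, b)` entry is `(-1)^⟨a,b⟩`. -/
def Smat (n : ℕ) : Matrix (Fin n → ZMod 2) (Fin n → ZMod 2) ℝ :=
  fun a b => sgn (bform a b)

/-- The diagonal matrix `D_v` with diagonal entry `(-1)^⟨u,v⟩` in position `u`. -/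
def Dmat {n : ℕ} (v : Fin n → ZMod 2) :
    Matrix (Fin n → ZMod 2) (Fin n → ZMod 2) ℝ :=
  Matrix.diagonal fun u => sgn (bform u v)

/-- The translation permutation matrix `T_v`, with entry `1` in row `u`,
column `u + v`, for every `u`. -/
def Tmat {n : ℕ} (v : Fin n → ZMod 2) :
    Matrix (Fin n → ZMod 2) (Fin n → ZMod 2) ℝ :=
  fun u w => if w = u + v then 1 else 0

/-- The permutation matrix `ρ(L)` of `L ∈ GL_n(F₂)` acting on `F₂ⁿ`: entry `1`
in row `u`, column `v`, exactly when `L v = u`. -/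
def rho {n : ℕ} (L : Matrix (Fin n) (Fin n) (ZMod 2)) :
    Matrix (Fin n → ZMod 2) (Fin n → ZMod 2) ℝ :=
  fun u w => if L.mulVec w = u then 1 else 0

/-!
`P` and `Q` are signed permutation matrices: row `a` of `P` has the single entry
`(-1)^⟨a,u⟩` in column `L⁻¹(a + v)`, row `b` of `Q` has `(-1)^⟨b,v⟩` in column `Lᵀ(b + u)`.
Hence `(P S Qᵀ)_{ab} = (-1)^(⟨a,u⟩ + ⟨b,v⟩ + ⟨L⁻¹(a + v), Lᵀ(b + u)⟩)`, and since
`⟨L⁻¹x, Lᵀy⟩ = ⟨x, y⟩` the exponent is `⟨a,b⟩ + ⟨u,v⟩` modulo 2.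
-/

open Matrix

lemma sgn_add (x y : ZMod 2) : sgn (x + y) = sgn x * sgn y := by
  simp only [sgn, ZMod.val_add, ← pow_add]
  rw [← neg_one_pow_eq_pow_mod_two]

lemma bform_add_left {n : ℕ} (a b c : Fin n → ZMod 2) :
    bform (a + b) c = bform a c + bform b c :=
  add_dotProduct a b c

lemma bform_add_right {n : ℕ} (a b c : Fin n → ZMod 2) :
    bform a (b + c) = bform a b + bform a c :=
  dotProduct_add a b c

lemma bform_comm {n : ℕ} (a b : Fin n → ZMod 2) : bform a b = bform b a :=
  dotProduct_comm a b

lemma bform_mulVec_transpose_mulVec {n : ℕ} {A B : Matrix (Fin n) (Fin n) (ZMod 2)}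
    (hAB : A * B = 1) (x y : Fin n → ZMod 2) :
    bform (B *ᵥ x) (Aᵀ *ᵥ y) = bform x y := by
  change (B *ᵥ x) ⬝ᵥ (Aᵀ *ᵥ y) = x ⬝ᵥ y
  rw [mulVec_transpose, dotProduct_comm, dotProduct_mulVec, vecMul_vecMul, hAB, vecMul_one,
    dotProduct_comm]

/-- Over `F₂` the cross terms of `⟨a + v, b + u⟩` cancel against `⟨a, u⟩ + ⟨b, v⟩` in pairs. -/
lemma bform_add_add_add_bform {n : ℕ} (a b u v : Fin n → ZMod 2) :
    bform a u + bform b v + bform (a + v) (b + u) = bform a b + bform u v := by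
  have two_eq_zero : (2 : ZMod 2) = 0 := rfl
  rw [bform_add_left, bform_add_right, bform_add_right, bform_comm v b, bform_comm v u]
  linear_combination (bform a u + bform b v) * two_eq_zero

lemma rho_apply_of_mul_eq_one {n : ℕ} {A B : Matrix (Fin n) (Fin n) (ZMod 2)}
    (hAB : A * B = 1) (hBA : B * A = 1) (x w : Fin n → ZMod 2) :
    rho A x w = if w = B *ᵥ x then 1 else 0 := by
  have : A *ᵥ w = x ↔ w = B *ᵥ x := by
    constructor
    · rintro rfl
      rw [mulVec_mulVec, hBA, one_mulVec]
    · rintro rfl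
      rw [mulVec_mulVec, hAB, one_mulVec]
  simp only [rho, this]

lemma Dmat_mul_Tmat_mul_apply {n : ℕ} (u v : Fin n → ZMod 2)
    (R : Matrix (Fin n → ZMod 2) (Fin n → ZMod 2) ℝ) (a c : Fin n → ZMod 2) :
    (Dmat u * Tmat v * R) a c = sgn (bform a u) * R (a + v) c := by
  rw [mul_apply]
  simp [Dmat, Tmat, diagonal_mul]

lemma mul_mul_transpose_apply_of_monomial {l m n o R : Type*} [Fintype m] [Fintype n]
    [DecidableEq m] [DecidableEq n] [CommSemiring R]
    {P : Matrix l m R} {Q : Matrix o n R} {f : l → m} {g : o → n} {x : l → R} {y : o → R}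
    (hP : ∀ a c, P a c = if c = f a then x a else 0)
    (hQ : ∀ b d, Q b d = if d = g b then y b else 0) (S : Matrix m n R) (a : l) (b : o) :
    (P * S * Qᵀ) a b = x a * y b * S (f a) (g b) := by
  simp [mul_apply, hP, hQ, mul_ite]
  ring

theorem stmt_4_general (n : ℕ) (u v : Fin n → ZMod 2)
    (L : GL (Fin n) (ZMod 2)) :
    (Dmat u * Tmat v * rho (L : Matrix (Fin n) (Fin n) (ZMod 2))) * Smat n *
        (Dmat v * Tmat u * rho ((L⁻¹ : GL (Fin n) (ZMod 2)) :
          Matrix (Fin n) (Fin n) (ZMod 2)).transpose).transpose =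
      sgn (bform u v) • Smat n := by
  set A : Matrix (Fin n) (Fin n) (ZMod 2) := (L : Matrix (Fin n) (Fin n) (ZMod 2))
  set B : Matrix (Fin n) (Fin n) (ZMod 2) :=
    ((L⁻¹ : GL (Fin n) (ZMod 2)) : Matrix (Fin n) (Fin n) (ZMod 2))
  have hAB : A * B = 1 := by simp [A, B]
  have hBA : B * A = 1 := by simp [A, B]
  have hBtAt : Bᵀ * Aᵀ = 1 := by rw [← transpose_mul, hAB, transpose_one]
  have hAtBt : Aᵀ * Bᵀ = 1 := by rw [← transpose_mul, hBA, transpose_one]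
  ext a b
  rw [mul_mul_transpose_apply_of_monomial (f := fun a => B *ᵥ (a + v))
      (g := fun b => Aᵀ *ᵥ (b + u)) (x := fun a => sgn (bform a u))
      (y := fun b => sgn (bform b v)) ?P ?Q]
  case P =>
    intros
    rw [Dmat_mul_Tmat_mul_apply, rho_apply_of_mul_eq_one hAB hBA, mul_ite, mul_one, mul_zero]
  case Q =>
    intros
    rw [Dmat_mul_Tmat_mul_apply, rho_apply_of_mul_eq_one hBtAt hAtBt, mul_ite, mul_one, mul_zero]
  rw [Smat, bform_mulVec_transpose_mulVec hAB, ← sgn_add, ← sgn_add, bform_add_add_add_bform,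
    sgn_add, Matrix.smul_apply, smul_eq_mul, mul_comm, Smat]

theorem stmt_4 (n : ℕ) (hn : 0 < n) (u v : Fin n → ZMod 2)
    (L : GL (Fin n) (ZMod 2)) :
    (Dmat u * Tmat v * rho (L : Matrix (Fin n) (Fin n) (ZMod 2))) * Smat n *
        (Dmat v * Tmat u * rho ((L⁻¹ : GL (Fin n) (ZMod 2)) :
          Matrix (Fin n) (Fin n) (ZMod 2)).transpose).transpose =
      sgn (bform u v) • Smat n :=
  stmt_4_general n u v L
end

section
/- Let H be a symmetric real Hadamard matrix of order n, let ℓ ∈ {0,1}, and let P and Q be {±1}-monomial matrices such that P·H·Qᵀ = (-1)^ℓ·H. Then for every odd positive integer j, the matrix n^{(1-j)/2}·(P·H)^j is a real Hadamard matrix of order n. -/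
/-- A `{±1}`-monomial matrix: exactly one nonzero entry, equal to `±1`,
in each row and each column. -/
def IsSignedMonomial {ι : Type*} [Fintype ι] [DecidableEq ι] (P : Matrix ι ι ℝ) : Prop :=
  ∃ (σ : Equiv.Perm ι) (d : ι → ℝ), (∀ j, d j = 1 ∨ d j = -1) ∧
    ∀ i j, P i j = if i = σ j then d j else 0

/-!
Write `M = P H`. Since `Q` is orthogonal, the hypothesis gives `P H = ± H Q`, and `H² = n I`
because `H` is a symmetric Hadamard matrix; hence `M² = ± n P Q`, so that
`n^{-k} M^{2k+1} = (± P Q)^k P H`. A signed monomial matrix times a Hadamard matrix is again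
Hadamard, and signed monomial matrices are closed under products and signs.
-/

open scoped Matrix

namespace IsSignedMonomial

variable {ι : Type*} [Fintype ι] [DecidableEq ι] {P Q : Matrix ι ι ℝ}

lemma mul_apply_eq {σ : Equiv.Perm ι} {d : ι → ℝ}
    (hP : ∀ i j, P i j = if i = σ j then d j else 0) (A : Matrix ι ι ℝ) (i j : ι) :
    (P * A) i j = d (σ.symm i) * A (σ.symm i) j := by
  rw [Matrix.mul_apply, Finset.sum_eq_single (σ.symm i)]
  · simp [hP]
  · intro k _ hk
    rw [hP, if_neg (fun he => hk (by rw [he, Equiv.symm_apply_apply])), zero_mul]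
  · simp

protected lemma one : IsSignedMonomial (1 : Matrix ι ι ℝ) :=
  ⟨1, fun _ => 1, fun _ => Or.inl rfl, fun i j => by simp [Matrix.one_apply]; rfl⟩

protected lemma mul (hP : IsSignedMonomial P) (hQ : IsSignedMonomial Q) :
    IsSignedMonomial (P * Q) := by
  obtain ⟨σ, d, hd, hPe⟩ := hP
  obtain ⟨τ, e, he, hQe⟩ := hQ
  refine ⟨σ * τ, fun j => d (τ j) * e j, fun j => ?_, fun i j => ?_⟩
  · rcases hd (τ j) with h | h <;> rcases he j with h' | h' <;> simp [h, h']
  · simp only [mul_apply_eq hPe, hQe, Equiv.Perm.mul_apply, ← Equiv.symm_apply_eq]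
    split_ifs with h
    · simp [← h]
    · simp

protected lemma pow (hP : IsSignedMonomial P) (k : ℕ) : IsSignedMonomial (P ^ k) := by
  induction k with
  | zero => exact pow_zero P ▸ IsSignedMonomial.one
  | succ k ih => exact (pow_succ P k).symm ▸ ih.mul hP

protected lemma smul {c : ℝ} (hc : c = 1 ∨ c = -1) (hP : IsSignedMonomial P) :
    IsSignedMonomial (c • P) := by
  obtain ⟨σ, d, hd, hPe⟩ := hP
  refine ⟨σ, fun j => c * d j, fun j => ?_, fun i j => ?_⟩
  · rcases hc with h | h <;> rcases hd j with h' | h' <;> simp [h, h']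
  · simp [hPe, mul_ite]

lemma mul_transpose_self (hP : IsSignedMonomial P) : P * Pᵀ = 1 := by
  obtain ⟨σ, d, hd, hPe⟩ := hP
  ext i j
  rw [mul_apply_eq hPe]
  simp only [Matrix.transpose_apply, hPe, Equiv.apply_symm_apply, Matrix.one_apply]
  by_cases hij : i = j
  · subst hij
    rcases hd (σ.symm i) with h | h <;> simp [h]
  · rw [if_neg (Ne.symm hij), if_neg hij, mul_zero]

lemma isHadamard_mul {H : Matrix ι ι ℝ} (hP : IsSignedMonomial P) (hH : IsHadamard H) :
    IsHadamard (P * H) := by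
  refine ⟨fun i j => ?_, ?_⟩
  · obtain ⟨σ, d, hd, hPe⟩ := hP
    rw [mul_apply_eq hPe]
    rcases hd (σ.symm i) with h | h <;> rcases hH.1 (σ.symm i) j with h' | h' <;> simp [h, h']
  · rw [Matrix.transpose_mul, Matrix.mul_assoc, ← Matrix.mul_assoc H, hH.2, Matrix.smul_mul,
      Matrix.one_mul, Matrix.mul_smul, hP.mul_transpose_self]

end IsSignedMonomial

lemma IsHadamard.mul_self_of_isSymm {ι : Type*} [Fintype ι] [DecidableEq ι]
    {H : Matrix ι ι ℝ} (hH : IsHadamard H) (hsym : H.IsSymm) :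
    H * H = (Fintype.card ι : ℝ) • 1 := by
  simpa only [hsym.eq] using hH.2

lemma Matrix.mul_self_mul_eq_smul_of_mul_mul_transpose_eq {ι R : Type*} [Fintype ι]
    [DecidableEq ι] [CommRing R] {H P Q : Matrix ι ι R} {c ε : R}
    (hH : H * H = c • 1) (hQ : Q * Qᵀ = 1) (h : P * H * Qᵀ = ε • H) :
    P * H * (P * H) = c • ε • (P * Q) := by
  have hPH : P * H = ε • (H * Q) := by
    rw [← Matrix.smul_mul, ← h, Matrix.mul_assoc _ Qᵀ, mul_eq_one_comm.mp hQ, Matrix.mul_one]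
  nth_rw 2 [hPH]
  rw [Matrix.mul_smul, ← Matrix.mul_assoc, Matrix.mul_assoc P H H, hH]
  simp [smul_comm c ε]

lemma pow_two_mul_add_one_eq_smul {R A : Type*} [CommSemiring R] [Semiring A] [Algebra R A]
    {M N : A} {c : R} (h : M * M = c • N) (k : ℕ) :
    M ^ (2 * k + 1) = c ^ k • (N ^ k * M) := by
  rw [pow_succ, pow_mul, sq, h, smul_pow, smul_mul_assoc]

lemma Real.sqrt_zpow_one_sub_odd {x : ℝ} (hx : 0 ≤ x) (k : ℕ) :
    √x ^ ((1 : ℤ) - ((2 * k + 1 : ℕ) : ℤ)) = (x ^ k)⁻¹ := by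
  rw [show (1 : ℤ) - ((2 * k + 1 : ℕ) : ℤ) = -((2 * k : ℕ) : ℤ) by push_cast; ring,
    zpow_neg, zpow_natCast, pow_mul, Real.sq_sqrt hx]

theorem stmt_7_general (n : ℕ) (hn : 0 < n) (H P Q : Matrix (Fin n) (Fin n) ℝ)
    (hH : IsHadamard H) (hsym : H.IsSymm)
    (hP : IsSignedMonomial P) (hQ : IsSignedMonomial Q)
    (ℓ : ℕ)
    (h : P * H * Q.transpose = ((-1 : ℝ) ^ ℓ) • H)
    (j : ℕ) (hj : Odd j) :
    IsHadamard ((Real.sqrt n ^ ((1 : ℤ) - (j : ℤ))) • (P * H) ^ j) := by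
  obtain ⟨k, rfl⟩ := hj
  have hHH : H * H = (n : ℝ) • 1 := by
    simpa only [Fintype.card_fin] using hH.mul_self_of_isSymm hsym
  have hsq := Matrix.mul_self_mul_eq_smul_of_mul_mul_transpose_eq hHH hQ.mul_transpose_self h
  have hN : IsSignedMonomial (((-1 : ℝ) ^ ℓ) • (P * Q)) :=
    (hP.mul hQ).smul (neg_one_pow_eq_or ℝ ℓ)
  have hn' : (n : ℝ) ^ k ≠ 0 := pow_ne_zero k (Nat.cast_ne_zero.mpr hn.ne')
  rw [pow_two_mul_add_one_eq_smul hsq, Real.sqrt_zpow_one_sub_odd n.cast_nonneg, smul_smul,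
    inv_mul_cancel₀ hn', one_smul]
  exact (hN.pow k).isHadamard_mul (hP.isHadamard_mul hH)

theorem stmt_7 (n : ℕ) (hn : 0 < n) (H P Q : Matrix (Fin n) (Fin n) ℝ)
    (hH : IsHadamard H) (hsym : H.IsSymm)
    (hP : IsSignedMonomial P) (hQ : IsSignedMonomial Q)
    (ℓ : ℕ) (hℓ : ℓ = 0 ∨ ℓ = 1)
    (h : P * H * Q.transpose = ((-1 : ℝ) ^ ℓ) • H)
    (j : ℕ) (hj : Odd j) (hj0 : 0 < j) :
    IsHadamard ((Real.sqrt n ^ ((1 : ℤ) - (j : ℤ))) • (P * H) ^ j) :=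
  stmt_7_general n hn H P Q hH hsym hP hQ ℓ h j hj
end

section
/- Let t ≥ 2 and n = 2^{t-1} - 1. Then the matrix A_{(t-1)} is invertible over F_2 and the Jordan block J_n satisfies J_n = A_{(t-1)}·(A_{(t-1)}^{-1})ᵀ. -/
/-- The unipotent Jordan block of size `n` over `F₂`: `1`'s on the main diagonal
and on the superdiagonal, `0`'s elsewhere. -/
def Jmat (n : ℕ) : Matrix (Fin n) (Fin n) (ZMod 2) :=
  fun i j => if (j : ℕ) = (i : ℕ) ∨ (j : ℕ) = (i : ℕ) + 1 then 1 else 0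

/-- The `s`-fold Kronecker power of the `2 × 2` matrix `[[1,1],[1,0]]` over `F₂`. -/
def kronPow : (s : ℕ) → Matrix (Fin (2 ^ s)) (Fin (2 ^ s)) (ZMod 2)
  | 0 => 1
  | s + 1 =>
      Matrix.reindex (finProdFinEquiv.trans (finCongr (by ring)))
        (finProdFinEquiv.trans (finCongr (by ring)))
        (Matrix.kroneckerMap (· * ·)
          (!![1, 1; 1, 0] : Matrix (Fin 2) (Fin 2) (ZMod 2)) (kronPow s))

/-- The matrix `A_{(s)}`: the `(2^s - 1) × (2^s - 1)` matrix obtained from the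
`s`-fold Kronecker power of `[[1,1],[1,0]]` by deleting its first row and its
last column. -/
def Amat (s : ℕ) : Matrix (Fin (2 ^ s - 1)) (Fin (2 ^ s - 1)) (ZMod 2) :=
  (kronPow s).submatrix
    (fun i => Fin.cast (Nat.sub_add_cancel Nat.one_le_two_pow) i.succ)
    (fun j => Fin.cast (Nat.sub_add_cancel Nat.one_le_two_pow) j.castSucc)

/-!
The entry of `kronPow s` at `(i, j)` is `1` exactly when `i` and `j` share no binary digit, since
each Kronecker factor `[[1,1],[1,0]]` contributes one bit. Its determinant is `det [[1,1],[1,0]] = 1`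
raised to a power, and its last column is the first unit vector, so Laplace expansion along that
column gives `det A = 1`. Then `J = A (A⁻¹)ᵀ` amounts to `J Aᵀ = A`, i.e. to
`[(j+1) ∧ i = 0] + [(j+1) ∧ (i+1) = 0] = [(i+1) ∧ j = 0]` for bitwise `∧`. Since by Kummer
`[x ∧ y = 0] ≡ C(x+y, x) (mod 2)`, this is Pascal's rule; in the last row the missing term vanishes
because `(j+1) ∧ (2^s - 1) = j+1 ≠ 0`.
-/

theorem Nat.land_eq_zero_iff_div_mod_two_pow (x y n : ℕ) :
    x &&& y = 0 ↔ x / 2 ^ n &&& y / 2 ^ n = 0 ∧ x % 2 ^ n &&& y % 2 ^ n = 0 := by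
  rw [← Nat.and_div_two_pow, ← Nat.and_mod_two_pow]
  constructor
  · intro h
    simp [h]
  · rintro ⟨hdiv, hmod⟩
    rw [← Nat.div_add_mod (x &&& y) (2 ^ n), hdiv, hmod, mul_zero]

theorem Nat.cast_choose_zmod_eq_mod_mul_div {p : ℕ} [Fact p.Prime] (n k : ℕ) :
    (n.choose k : ZMod p) = (n % p).choose (k % p) * (n / p).choose (k / p) := by
  exact_mod_cast (ZMod.natCast_eq_natCast_iff _ _ _).2
    Choose.choose_modEq_choose_mod_mul_choose_div_nat

-- Kummer's theorem for `p = 2`: adding `x` and `y` produces no carry iff they share no bit.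
theorem Nat.cast_choose_add_zmod_two (x y : ℕ) :
    ((x + y).choose x : ZMod 2) = if x &&& y = 0 then 1 else 0 := by
  induction x using Nat.strongRecOn generalizing y with
  | _ x ih =>
  rcases Nat.eq_zero_or_pos x with rfl | hx
  · simp
  have hsplit := Nat.land_eq_zero_iff_div_mod_two_pow x y 1
  rw [pow_one] at hsplit
  rw [Nat.cast_choose_zmod_eq_mod_mul_div, if_congr hsplit rfl rfl]
  by_cases hcarry : x % 2 = 1 ∧ y % 2 = 1
  · rw [show (x + y) % 2 = 0 by omega, hcarry.1, hcarry.2]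
    simp
  · have hlow : ((x + y) % 2).choose (x % 2) = 1 ∧ x % 2 &&& y % 2 = 0 := by
      rcases Nat.mod_two_eq_zero_or_one x with h | h <;>
        rcases Nat.mod_two_eq_zero_or_one y with h' | h' <;>
        simp_all [Nat.add_mod]
    rw [show (x + y) / 2 = x / 2 + y / 2 by omega, ih (x / 2) (by omega), hlow.1]
    simp [hlow.2]

-- Pascal's rule `C(b+c+2, b+1) = C(b+c+1, b) + C(b+c+1, b+1)`, read modulo 2 through Kummer.
theorem ite_land_succ_add_ite_land_succ_succ (b c : ℕ) :
    ((if (b + 1) &&& c = 0 then 1 else 0) + if (b + 1) &&& (c + 1) = 0 then 1 else 0 : ZMod 2) =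
      if (c + 1) &&& b = 0 then 1 else 0 := by
  have hleft : (b + 1 + c).choose (b + 1) = (b + c + 1).choose (b + 1) := by rw [add_right_comm]
  have hpascal : (b + 1 + (c + 1)).choose (b + 1) =
      (b + c + 1).choose b + (b + c + 1).choose (b + 1) := by
    rw [show b + 1 + (c + 1) = b + c + 1 + 1 by ring, Nat.choose_succ_succ]
  have hright : (c + 1 + b).choose (c + 1) = (b + c + 1).choose b := by
    rw [Nat.choose_symm_add, add_comm (c + 1), ← add_assoc]
  simp only [← Nat.cast_choose_add_zmod_two, hleft, hpascal, hright, Nat.cast_add]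
  rw [add_left_comm, CharTwo.add_self_eq_zero, add_zero]

theorem kronPow_apply (s : ℕ) (i j : Fin (2 ^ s)) :
    kronPow s i j = if (i : ℕ) &&& j = 0 then 1 else 0 := by
  induction s with
  | zero =>
    fin_cases i; fin_cases j; rfl
  | succ s ih =>
    have hM (a c : Fin 2) : (!![1, 1; 1, 0] : Matrix (Fin 2) (Fin 2) (ZMod 2)) a c =
        if (a : ℕ) &&& c = 0 then 1 else 0 := by
      fin_cases a <;> fin_cases c <;> rfl
    have hpos : 0 < 2 ^ s := Nat.two_pow_pos s
    have hhigh (k : Fin (2 ^ (s + 1))) : (k : ℕ) / 2 ^ s < 2 :=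
      Nat.div_lt_of_lt_mul (by rw [← pow_succ]; exact k.isLt)
    calc kronPow (s + 1) i j
        = (!![1, 1; 1, 0] : Matrix (Fin 2) (Fin 2) (ZMod 2)) ⟨_, hhigh i⟩ ⟨_, hhigh j⟩ *
            kronPow s ⟨_, Nat.mod_lt i hpos⟩ ⟨_, Nat.mod_lt j hpos⟩ := rfl
      _ = _ := by
        rw [hM, ih, ite_zero_mul_ite_zero, mul_one]
        exact if_congr (Nat.land_eq_zero_iff_div_mod_two_pow _ _ s).symm rfl rfl

theorem det_kronPow (s : ℕ) : (kronPow s).det = 1 := by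
  induction s with
  | zero => exact Matrix.det_one
  | succ s ih =>
    rw [kronPow, Matrix.det_reindex_self, Matrix.det_kronecker, ih, Matrix.det_fin_two_of,
      one_pow, mul_one]
    simp

theorem det_Amat (s : ℕ) : (Amat s).det = 1 := by
  have hN : 2 ^ s - 1 + 1 = 2 ^ s := Nat.sub_add_cancel Nat.one_le_two_pow
  set K := (kronPow s).submatrix (Fin.cast hN) (Fin.cast hN) with hK_def
  have hK : K.det = 1 := by
    rw [← det_kronPow s]
    exact Matrix.det_submatrix_equiv_self (finCongr hN) _
  -- The last column of `kronPow s` is the first unit vector, so expanding along it leaves `Amat s`.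
  have hlast (i : Fin (2 ^ s - 1 + 1)) : K i (Fin.last _) = if i = 0 then 1 else 0 := by
    rw [hK_def, Matrix.submatrix_apply, kronPow_apply, Fin.val_cast, Fin.val_cast, Fin.val_last,
      Nat.and_two_pow_sub_one_of_lt_two_pow (by omega)]
    exact if_congr Fin.val_eq_zero_iff rfl rfl
  rw [Matrix.det_succ_column K (Fin.last _), Finset.sum_eq_single 0 (fun i _ hi => by
    rw [hlast, if_neg hi, mul_zero, zero_mul]) (by simp), hlast, if_pos rfl,
    Fin.succAbove_zero, Fin.succAbove_last,
    show K.submatrix Fin.succ Fin.castSucc = Amat s from rfl] at hK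
  simpa [CharTwo.neg_eq] using hK

theorem Amat_apply (s : ℕ) (i j : Fin (2 ^ s - 1)) :
    Amat s i j = if ((i : ℕ) + 1) &&& j = 0 then 1 else 0 := by
  rw [Amat, Matrix.submatrix_apply, kronPow_apply]
  rfl

theorem Jmat_mul_transpose_Amat (s : ℕ) : Jmat (2 ^ s - 1) * (Amat s).transpose = Amat s := by
  ext i j
  set f : ℕ → ZMod 2 := fun k => if ((j : ℕ) + 1) &&& k = 0 then 1 else 0 with hf
  have hrow (k : Fin (2 ^ s - 1)) : Jmat _ i k * (Amat s).transpose k j =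
      (if (k : ℕ) = i then f k else 0) + if (k : ℕ) = i + 1 then f k else 0 := by
    rw [Matrix.transpose_apply, Amat_apply, Jmat]
    by_cases h : (k : ℕ) = i <;> by_cases h' : (k : ℕ) = i + 1 <;> simp [h, h', hf]
  have hboundary : f (2 ^ s - 1) = 0 := by
    show (if ((j : ℕ) + 1) &&& (2 ^ s - 1) = 0 then 1 else 0 : ZMod 2) = 0
    rw [Nat.and_two_pow_sub_one_of_lt_two_pow (by omega), if_neg (by omega)]
  rw [Matrix.mul_apply, Finset.sum_congr rfl (fun k _ => hrow k),
    Fin.sum_univ_eq_sum_range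
      (fun k => (if k = (i : ℕ) then f k else 0) + if k = i + 1 then f k else 0),
    Finset.sum_add_distrib, Finset.sum_ite_eq', Finset.sum_ite_eq',
    if_pos (Finset.mem_range.2 i.isLt)]
  have hnext : (if (i : ℕ) + 1 ∈ Finset.range (2 ^ s - 1) then f (i + 1) else 0) = f (i + 1) := by
    split_ifs with h
    · rfl
    · rw [show (i : ℕ) + 1 = 2 ^ s - 1 by rw [Finset.mem_range] at h; omega, hboundary]
  rw [hnext, hf, ite_land_succ_add_ite_land_succ_succ, Amat_apply]

theorem stmt_11_general (t : ℕ) :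
    IsUnit (Amat (t - 1)) ∧
      Jmat (2 ^ (t - 1) - 1) = Amat (t - 1) * ((Amat (t - 1))⁻¹).transpose := by
  have hdet : IsUnit (Amat (t - 1)).det := by rw [det_Amat]; exact isUnit_one
  refine ⟨(Matrix.isUnit_iff_isUnit_det _).2 hdet, ?_⟩
  calc Jmat (2 ^ (t - 1) - 1)
      = Jmat _ * (Amat (t - 1)).transpose * (Amat (t - 1)).transpose⁻¹ :=
        (Matrix.mul_nonsing_inv_cancel_right _ _ (by rwa [Matrix.det_transpose])).symm
    _ = _ := by rw [Jmat_mul_transpose_Amat, Matrix.transpose_nonsing_inv]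

theorem stmt_11 (t : ℕ) (ht : 2 ≤ t) :
    IsUnit (Amat (t - 1)) ∧
      Jmat (2 ^ (t - 1) - 1) = Amat (t - 1) * ((Amat (t - 1))⁻¹).transpose :=
  stmt_11_general t
end

section
/- Let t ≥ 2 and n = 2^{t-1} - 1. Then ∑_{i=0}^{n} J_n^i = 0, the n×n zero matrix over F_2. -/
def Nmat (n : ℕ) : Matrix (Fin n) (Fin n) (ZMod 2) :=
  fun i j => if (j : ℕ) = (i : ℕ) + 1 then 1 else 0

lemma Nmat_pow (n k : ℕ) (i j : Fin n) :
    (Nmat n ^ k) i j = if (j : ℕ) = (i : ℕ) + k then 1 else 0 := by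
  induction k generalizing i j with
  | zero =>
    simp [Matrix.one_apply, Fin.ext_iff, eq_comm]
  | succ k ih =>
    rw [pow_succ, Matrix.mul_apply]
    by_cases h : (j : ℕ) = (i : ℕ) + (k + 1)
    · have hik : (i : ℕ) + k < n := by omega
      rw [Finset.sum_eq_single (⟨(i : ℕ) + k, hik⟩ : Fin n)]
      · simp [ih, Nmat, h]
        omega
      · intro b _ hb
        rw [ih]
        by_cases hb' : (b : ℕ) = (i : ℕ) + k
        · exact absurd (Fin.ext hb') hb
        · simp [hb']
      · simp
    · simp only [h, if_false]
      apply Finset.sum_eq_zero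
      intro b _
      rw [ih, Nmat]
      by_cases hb : (b : ℕ) = (i : ℕ) + k
      · have : (j : ℕ) ≠ (b : ℕ) + 1 := by omega
        simp [this]
      · simp [hb]

lemma Nmat_pow_self (n : ℕ) : Nmat n ^ n = 0 := by
  ext i j
  rw [Nmat_pow]
  have : (j : ℕ) ≠ (i : ℕ) + n := by have := j.isLt; omega
  simp [this]

lemma Jmat_eq (n : ℕ) : Jmat n = 1 + Nmat n := by
  ext i j
  simp only [Jmat, Nmat, Matrix.add_apply, Matrix.one_apply, Fin.ext_iff]
  by_cases h1 : (j : ℕ) = (i : ℕ)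
  · have : (j : ℕ) ≠ (i : ℕ) + 1 := by omega
    simp [h1, this, eq_comm]
  · by_cases h2 : (j : ℕ) = (i : ℕ) + 1
    · simp [h1, h2, Ne.symm h1]
    · simp [h1, h2, Ne.symm h1]

lemma poly_id (k : ℕ) :
    ∑ i ∈ Finset.range (2 ^ k), (Polynomial.X : Polynomial (ZMod 2)) ^ i
      = (Polynomial.X + 1) ^ (2 ^ k - 1) := by
  have hX : (Polynomial.X + 1 : Polynomial (ZMod 2)) ≠ 0 := by
    simpa using Polynomial.X_add_C_ne_zero (1 : ZMod 2)
  apply mul_right_cancel₀ hX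
  have h1 : (Polynomial.X + 1 : Polynomial (ZMod 2)) ^ (2 ^ k - 1) * (Polynomial.X + 1)
      = (Polynomial.X + 1) ^ (2 ^ k) := by
    rw [← pow_succ]
    congr 1
    have : 1 ≤ 2 ^ k := Nat.one_le_two_pow
    omega
  have hsub : (Polynomial.X + 1 : Polynomial (ZMod 2)) = Polynomial.X - 1 :=
    (CharTwo.sub_eq_add _ _).symm
  rw [h1, add_pow_char_pow, one_pow, hsub, geom_sum_mul, CharTwo.sub_eq_add]

/-- For `t ≥ 2` and `n = 2^(t-1) - 1`, the sum `∑_{i=0}^{n} J_n^i` vanishes. -/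
theorem stmt_14 (t : ℕ) (ht : 2 ≤ t) :
    ∑ i ∈ Finset.range ((2 ^ (t - 1) - 1) + 1), Jmat (2 ^ (t - 1) - 1) ^ i = 0 := by
  set n := 2 ^ (t - 1) - 1 with hn
  have hrange : n + 1 = 2 ^ (t - 1) := by
    have : 1 ≤ 2 ^ (t - 1) := Nat.one_le_two_pow
    omega
  have key := congrArg (Polynomial.aeval (Jmat n)) (poly_id (t - 1))
  simp only [map_sum, map_pow, map_add, map_one, Polynomial.aeval_X] at key
  rw [hrange, key]
  have hJ : Jmat n + 1 = Nmat n := by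
    rw [Jmat_eq]
    have : (1 + 1 : Matrix (Fin n) (Fin n) (ZMod 2)) = 0 := by
      ext i j
      simp only [Matrix.add_apply, Matrix.one_apply, Matrix.zero_apply]
      split <;> decide
    rw [add_comm 1 (Nmat n), add_assoc, this, add_zero]
  rw [hJ, ← hrange]
  simp [Nmat_pow_self]
end

section
/- Let t ≥ 2, n = 2^{t-1} - 1, let v = (0,…,0,1)ᵀ ∈ F_2^n be the last standard basis vector and u = (1,0,…,0)ᵀ ∈ F_2^n the first standard basis vector, and consider the affine permutation f of F_2^n given by f(a) = J_n·a + v. If γ ∈ F_2^n is the sum of the elements of any orbit of ⟨f⟩ on F_2^n, then ⟨γ, u⟩ = 1; that is, the first coordinate of the sum of the elements of every orbit equals 1. -/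
/-- The last standard basis vector `(0, …, 0, 1)ᵀ` of `F₂ⁿ`. -/
def lastBasis (n : ℕ) : Fin n → ZMod 2 :=
  fun i => if (i : ℕ) = n - 1 then 1 else 0

/-- The first standard basis vector `(1, 0, …, 0)ᵀ` of `F₂ⁿ`. -/
def firstBasis (n : ℕ) : Fin n → ZMod 2 :=
  fun i => if (i : ℕ) = 0 then 1 else 0

open Polynomial Function

namespace Stmt16Aux

/-- The affine map `x ↦ J x + v`. -/
def fA (n : ℕ) : (Fin n → ZMod 2) → (Fin n → ZMod 2) :=
  fun x => (Jmat n).mulVec x + lastBasis n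

/-- The nilpotent shift operator. -/
def shiftL (n : ℕ) : (Fin n → ZMod 2) →ₗ[ZMod 2] (Fin n → ZMod 2) where
  toFun a := fun i => if h : (i : ℕ) + 1 < n then a ⟨(i : ℕ) + 1, h⟩ else 0
  map_add' a b := by
    funext i
    by_cases h : (i : ℕ) + 1 < n <;> simp [h]
  map_smul' c a := by
    funext i
    by_cases h : (i : ℕ) + 1 < n <;> simp [h]

lemma shiftL_apply (n : ℕ) (a : Fin n → ZMod 2) (i : Fin n) :
    shiftL n a i = if h : (i : ℕ) + 1 < n then a ⟨(i : ℕ) + 1, h⟩ else 0 := rfl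

lemma shiftL_pow (n j : ℕ) : ∀ (a : Fin n → ZMod 2) (i : Fin n),
    ((shiftL n ^ j) a) i = if h : (i : ℕ) + j < n then a ⟨(i : ℕ) + j, h⟩ else 0 := by
  induction j with
  | zero => intro a i; simp
  | succ j ih =>
    intro a i
    rw [pow_succ, Module.End.mul_apply, ih]
    by_cases h : (i : ℕ) + j < n
    · rw [dif_pos h, shiftL_apply]
      by_cases h2 : (i : ℕ) + (j + 1) < n
      · rw [dif_pos (show (i : ℕ) + j + 1 < n by omega), dif_pos h2]
        congr 1
      · rw [dif_neg (show ¬ ((i : ℕ) + j + 1 < n) by omega), dif_neg h2]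
    · rw [dif_neg h, dif_neg (show ¬ ((i : ℕ) + (j + 1) < n) by omega)]

lemma shiftL_pow_eq_zero (n j : ℕ) (hj : n ≤ j) : (shiftL n ^ j) = 0 := by
  apply LinearMap.ext
  intro a
  funext i
  rw [shiftL_pow]
  rw [dif_neg (by omega)]
  rfl

lemma sum_ind (n : ℕ) (c : ℕ) (x : Fin n → ZMod 2) :
    (∑ j : Fin n, if (j : ℕ) = c then x j else 0)
      = if h : c < n then x ⟨c, h⟩ else 0 := by
  by_cases h : c < n
  · rw [dif_pos h, Finset.sum_eq_single (⟨c, h⟩ : Fin n)]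
    · simp
    · intro j _ hj
      rw [if_neg]
      intro hc
      exact hj (Fin.ext hc)
    · intro hmem; exact absurd (Finset.mem_univ _) hmem
  · rw [dif_neg h, Finset.sum_eq_zero]
    intro j _
    rw [if_neg]
    have := j.isLt
    omega

lemma Jmat_mulVec (n : ℕ) (x : Fin n → ZMod 2) :
    (Jmat n).mulVec x = x + shiftL n x := by
  funext i
  have hsplit : ∀ j : Fin n, Jmat n i j * x j =
      (if (j : ℕ) = (i : ℕ) then x j else 0)
        + (if (j : ℕ) = (i : ℕ) + 1 then x j else 0) := by
    intro j
    by_cases h1 : (j : ℕ) = (i : ℕ) <;> by_cases h2 : (j : ℕ) = (i : ℕ) + 1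
    · omega
    · simp [Jmat, h1, h2]
    · simp [Jmat, h1, h2]
    · simp [Jmat, h1, h2]
  show ∑ j, Jmat n i j * x j = x i + shiftL n x i
  rw [Finset.sum_congr rfl fun j _ => hsplit j, Finset.sum_add_distrib,
    sum_ind, sum_ind, shiftL_apply, dif_pos i.isLt]

/-- applying `aeval` of a product -/
lemma aeval_mul_apply (n : ℕ) (p q : (ZMod 2)[X]) (w : Fin n → ZMod 2) :
    aeval (shiftL n) (p * q) w = aeval (shiftL n) p (aeval (shiftL n) q w) := by
  rw [map_mul]; rfl

lemma aeval_add_apply (n : ℕ) (p q : (ZMod 2)[X]) (w : Fin n → ZMod 2) :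
    aeval (shiftL n) (p + q) w = aeval (shiftL n) p w + aeval (shiftL n) q w := by
  rw [map_add]; rfl

lemma aeval_one_apply (n : ℕ) (w : Fin n → ZMod 2) :
    aeval (shiftL n) (1 : (ZMod 2)[X]) w = w := by
  rw [map_one]; rfl

lemma aeval_X_pow_apply (n j : ℕ) (w : Fin n → ZMod 2) :
    aeval (shiftL n) ((X : (ZMod 2)[X]) ^ j) w = (shiftL n ^ j) w := by
  rw [map_pow, aeval_X]

lemma aeval_one_add_X_apply (n : ℕ) (w : Fin n → ZMod 2) :
    aeval (shiftL n) (1 + X : (ZMod 2)[X]) w = w + shiftL n w := by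
  rw [aeval_add_apply, aeval_one_apply, aeval_X]

lemma iter_formula (n : ℕ) (k : ℕ) (a : Fin n → ZMod 2) :
    (fA n)^[k] a = aeval (shiftL n) ((1 + X : (ZMod 2)[X]) ^ k) a
      + aeval (shiftL n) (∑ i ∈ Finset.range k, (1 + X : (ZMod 2)[X]) ^ i)
          (lastBasis n) := by
  induction k with
  | zero => simp [aeval_one_apply]
  | succ k ih =>
    rw [Function.iterate_succ_apply', ih]
    show (Jmat n).mulVec _ + lastBasis n = _
    rw [Jmat_mulVec]
    have key : ∀ w : Fin n → ZMod 2, ∀ p : (ZMod 2)[X],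
        aeval (shiftL n) p w + shiftL n (aeval (shiftL n) p w)
          = aeval (shiftL n) ((1 + X) * p) w := by
      intro w p
      rw [aeval_mul_apply, aeval_one_add_X_apply]
    calc (aeval (shiftL n) ((1 + X : (ZMod 2)[X]) ^ k) a
            + aeval (shiftL n) (∑ i ∈ Finset.range k, (1 + X : (ZMod 2)[X]) ^ i)
                (lastBasis n))
          + shiftL n (aeval (shiftL n) ((1 + X : (ZMod 2)[X]) ^ k) a
            + aeval (shiftL n) (∑ i ∈ Finset.range k, (1 + X : (ZMod 2)[X]) ^ i)
                (lastBasis n))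
          + lastBasis n
        = (aeval (shiftL n) ((1 + X : (ZMod 2)[X]) ^ k) a
            + shiftL n (aeval (shiftL n) ((1 + X : (ZMod 2)[X]) ^ k) a))
          + ((aeval (shiftL n) (∑ i ∈ Finset.range k, (1 + X : (ZMod 2)[X]) ^ i)
                (lastBasis n)
            + shiftL n (aeval (shiftL n)
                (∑ i ∈ Finset.range k, (1 + X : (ZMod 2)[X]) ^ i) (lastBasis n)))
            + aeval (shiftL n) (1 : (ZMod 2)[X]) (lastBasis n)) := by
          rw [map_add (shiftL n), aeval_one_apply]
          abel
      _ = aeval (shiftL n) ((1 + X : (ZMod 2)[X]) ^ (k + 1)) a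
            + aeval (shiftL n)
                ((1 + X) * (∑ i ∈ Finset.range k, (1 + X : (ZMod 2)[X]) ^ i) + 1)
                (lastBasis n) := by
          rw [key, key, aeval_add_apply, ← pow_succ']
      _ = _ := by rw [← geom_sum_succ]

lemma geom_pow (s : ℕ) :
    (∑ k ∈ Finset.range (2 ^ s), (1 + X : (ZMod 2)[X]) ^ k) = X ^ (2 ^ s - 1) := by
  have h := geom_sum_mul (1 + X : (ZMod 2)[X]) (2 ^ s)
  have hc : (1 + X : (ZMod 2)[X]) ^ (2 ^ s) = 1 + X ^ (2 ^ s) := by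
    have := add_pow_char_pow (R := (ZMod 2)[X]) (p := 2) (n := s)
      (x := (1 : (ZMod 2)[X])) (y := X)
    simpa using this
  rw [hc, add_sub_cancel_left, add_sub_cancel_left] at h
  have h2 : (X : (ZMod 2)[X]) ^ (2 ^ s) = X ^ (2 ^ s - 1) * X := by
    rw [← pow_succ]
    congr 1
    have := Nat.one_le_two_pow (n := s)
    omega
  rw [h2] at h
  exact mul_right_cancel₀ X_ne_zero h

lemma nested_geom (s : ℕ) (hs : 1 ≤ s) :
    (∑ k ∈ Finset.range (2 ^ s), ∑ i ∈ Finset.range k, (1 + X : (ZMod 2)[X]) ^ i)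
      = X ^ (2 ^ s - 2) := by
  apply mul_right_cancel₀ (X_ne_zero : (X : (ZMod 2)[X]) ≠ 0)
  rw [Finset.sum_mul]
  have e : ∀ k, (∑ i ∈ Finset.range k, (1 + X : (ZMod 2)[X]) ^ i) * X
      = (1 + X) ^ k - 1 := by
    intro k
    have h := geom_sum_mul (1 + X : (ZMod 2)[X]) k
    rwa [add_sub_cancel_left] at h
  rw [Finset.sum_congr rfl fun k _ => e k, Finset.sum_sub_distrib, geom_pow]
  have h2 : (2 ^ s : ℕ) • (1 : (ZMod 2)[X]) = 0 := by
    rw [nsmul_eq_mul, mul_one]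
    rw [CharP.cast_eq_zero_iff _ 2]
    exact dvd_pow_self 2 (by omega)
  rw [Finset.sum_const, Finset.card_range, h2, sub_zero, ← pow_succ]
  congr 1
  have := Nat.one_le_two_pow (n := s)
  have h4 : 2 ≤ 2 ^ s := by
    calc 2 = 2 ^ 1 := rfl
    _ ≤ 2 ^ s := Nat.pow_le_pow_right (by norm_num) hs
  omega


lemma main (s : ℕ) (hs : 1 ≤ s) (n : ℕ) (hn : n + 1 = 2 ^ s)
    (a : Fin n → ZMod 2) :
    bform
      (∑ b ∈ (Set.toFinite {b : Fin n → ZMod 2 |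
          ∃ k : ℕ, (fA n)^[k] a = b}).toFinset, b)
      (firstBasis n) = 1 := by
  have h2 : 2 ≤ 2 ^ s := by
    calc 2 = 2 ^ 1 := rfl
    _ ≤ 2 ^ s := Nat.pow_le_pow_right (by norm_num) hs
  have hNpos : 0 < n := by omega
  have hhalf : 2 * 2 ^ (s - 1) = 2 ^ s := by
    rw [← pow_succ']
    congr 1
    omega
  have hh1 : 1 ≤ 2 ^ (s - 1) := Nat.one_le_two_pow
  -- period 2^s
  have hfm : ∀ b : Fin n → ZMod 2, (fA n)^[2 ^ s] b = b := by
    intro b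
    rw [iter_formula, geom_pow s]
    have hc : (1 + X : (ZMod 2)[X]) ^ (2 ^ s) = 1 + X ^ (2 ^ s) := by
      have := add_pow_char_pow (R := (ZMod 2)[X]) (p := 2) (n := s)
        (x := (1 : (ZMod 2)[X])) (y := X)
      simpa using this
    rw [hc, aeval_add_apply, aeval_one_apply, aeval_X_pow_apply, aeval_X_pow_apply,
      shiftL_pow_eq_zero n (2 ^ s) (by omega),
      shiftL_pow_eq_zero n (2 ^ s - 1) (by omega)]
    simp
  -- not periodic with period 2^(s-1)
  have hnot : ∀ b : Fin n → ZMod 2,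
      ¬ Function.IsPeriodicPt (fA n) (2 ^ (s - 1)) b := by
    intro b hcon
    have hcon' : (fA n)^[2 ^ (s - 1)] b = b := hcon
    rw [iter_formula, geom_pow (s - 1)] at hcon'
    have hc : (1 + X : (ZMod 2)[X]) ^ (2 ^ (s - 1)) = 1 + X ^ (2 ^ (s - 1)) := by
      have := add_pow_char_pow (R := (ZMod 2)[X]) (p := 2) (n := s - 1)
        (x := (1 : (ZMod 2)[X])) (y := X)
      simpa using this
    rw [hc, aeval_add_apply, aeval_one_apply, aeval_X_pow_apply,
      aeval_X_pow_apply] at hcon'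
    have hidx : 2 ^ (s - 1) - 1 < n := by omega
    have hco := congrFun hcon' ⟨2 ^ (s - 1) - 1, hidx⟩
    rw [Pi.add_apply, Pi.add_apply, shiftL_pow, shiftL_pow,
      dif_neg (by simp; omega), dif_pos (by simp; omega)] at hco
    have hlast : lastBasis n
        ⟨2 ^ (s - 1) - 1 + (2 ^ (s - 1) - 1), by omega⟩ = 1 := by
      rw [lastBasis, if_pos]
      simp
      omega
    rw [hlast] at hco
    simp at hco
  -- minimal period is exactly 2^s
  have hminp : ∀ b : Fin n → ZMod 2,
      Function.minimalPeriod (fA n) b = 2 ^ s := by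
    intro b
    have hper : Function.IsPeriodicPt (fA n) (2 ^ s) b := hfm b
    have hdvd : Function.minimalPeriod (fA n) b ∣ 2 ^ s := hper.minimalPeriod_dvd
    rcases (Nat.dvd_prime_pow Nat.prime_two).mp hdvd with ⟨j, hj, hjeq⟩
    by_contra hne
    have hjlt : j ≤ s - 1 := by
      rcases Nat.lt_or_ge j s with h | h
      · omega
      · exfalso; apply hne; rw [hjeq]; congr 1; omega
    have hdvd2 : Function.minimalPeriod (fA n) b ∣ 2 ^ (s - 1) := by
      rw [hjeq]; exact pow_dvd_pow 2 hjlt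
    exact hnot b
      ((Function.isPeriodicPt_minimalPeriod (fA n) b).trans_dvd hdvd2)
  -- orbit finset is the image of range 2^s
  have horb : (Set.toFinite {b : Fin n → ZMod 2 |
        ∃ k : ℕ, (fA n)^[k] a = b}).toFinset
      = (Finset.range (2 ^ s)).image (fun k => (fA n)^[k] a) := by
    ext b
    rw [Set.Finite.mem_toFinset, Set.mem_setOf_eq, Finset.mem_image]
    constructor
    · rintro ⟨k, rfl⟩
      refine ⟨k % 2 ^ s, Finset.mem_range.mpr (Nat.mod_lt _ (by omega)), ?_⟩
      have hit := Function.iterate_mod_minimalPeriod_eq (f := fA n) (x := a) (n := k)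
      rwa [hminp a] at hit
    · rintro ⟨k, _, rfl⟩
      exact ⟨k, rfl⟩
  -- the orbit sum equals the first basis vector
  have hsum : (∑ k ∈ Finset.range (2 ^ s), (fA n)^[k] a) = firstBasis n := by
    rw [Finset.sum_congr rfl fun k _ => iter_formula n k a, Finset.sum_add_distrib]
    have hmap : ∀ (P : ℕ → (ZMod 2)[X]) (w : Fin n → ZMod 2),
        (∑ k ∈ Finset.range (2 ^ s), aeval (shiftL n) (P k) w)
          = aeval (shiftL n) (∑ k ∈ Finset.range (2 ^ s), P k) w := by
      intro P w
      rw [map_sum]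
      exact (LinearMap.sum_apply _ _ _).symm
    rw [hmap, hmap, geom_pow s, nested_geom s hs,
      aeval_X_pow_apply, aeval_X_pow_apply,
      shiftL_pow_eq_zero n (2 ^ s - 1) (by omega)]
    have hNm : 2 ^ s - 2 = n - 1 := by omega
    rw [hNm]
    funext i
    rw [LinearMap.zero_apply, Pi.add_apply, Pi.zero_apply, zero_add, shiftL_pow]
    by_cases hi : (i : ℕ) = 0
    · rw [dif_pos (by omega)]
      rw [firstBasis, if_pos hi, lastBasis, if_pos (by simp; omega)]
    · rw [dif_neg (by have := i.isLt; omega)]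
      rw [firstBasis, if_neg hi]
  -- injectivity on range 2^s
  have hinj : ∀ i ∈ Finset.range (2 ^ s), ∀ j ∈ Finset.range (2 ^ s),
      (fA n)^[i] a = (fA n)^[j] a → i = j := by
    intro i hi j hj hij
    have h := Function.iterate_injOn_Iio_minimalPeriod (f := fA n) (x := a)
    rw [hminp a] at h
    exact h (Finset.mem_range.mp hi) (Finset.mem_range.mp hj) hij
  -- assemble
  rw [horb, Finset.sum_image hinj, hsum]
  rw [bform, Finset.sum_eq_single (⟨0, hNpos⟩ : Fin n)]
  · rw [firstBasis]; norm_num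
  · intro j _ hj
    rw [firstBasis, if_neg, zero_mul]
    intro hc
    exact hj (Fin.ext hc)
  · intro hmem; exact absurd (Finset.mem_univ _) hmem

end Stmt16Aux

open Stmt16Aux

/-- For `t ≥ 2`, `n = 2^(t-1) - 1`, `v` the last and `u` the first standard basis
vectors, the sum `γ` of the elements of any orbit of the affine permutation
`a ↦ J_n a + v` on `F₂ⁿ` satisfies `⟨γ, u⟩ = 1`. -/
theorem stmt_16 (t : ℕ) (ht : 2 ≤ t) :
    ∀ a : Fin (2 ^ (t - 1) - 1) → ZMod 2,
      bform
        (∑ b ∈ (Set.toFinite {b : Fin (2 ^ (t - 1) - 1) → ZMod 2 |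
            ∃ k : ℕ,
              (fun x : Fin (2 ^ (t - 1) - 1) → ZMod 2 =>
                  (Jmat (2 ^ (t - 1) - 1)).mulVec x + lastBasis (2 ^ (t - 1) - 1))^[k] a
                = b}).toFinset, b)
        (firstBasis (2 ^ (t - 1) - 1)) = 1 := by
  intro a
  rw [show (fun x : Fin (2 ^ (t - 1) - 1) → ZMod 2 =>
      (Jmat (2 ^ (t - 1) - 1)).mulVec x + lastBasis (2 ^ (t - 1) - 1))
      = fA (2 ^ (t - 1) - 1) from rfl]
  exact main (t - 1) (by omega) (2 ^ (t - 1) - 1)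
    (by have := Nat.one_le_two_pow (n := t - 1); omega) a
end

section
/- Every eigenvalue of the 8×8 real matrix H = [[1,1,1,1,-1,-1,-1,-1],[-1,1,1,-1,-1,1,1,-1],[-1,-1,1,1,1,1,-1,-1],[1,-1,1,-1,1,-1,1,-1],[1,-1,1,-1,-1,1,-1,1],[-1,-1,1,1,-1,-1,1,1],[-1,1,1,-1,1,-1,-1,1],[1,1,1,1,1,1,1,1]] is a primitive 16-th root of unity times √8; equivalently, H is a real Hadamard matrix of order 8 and the characteristic polynomial of 8^{-1/2}·H is x^8 + 1. -/
open Polynomial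
open scoped Matrix

namespace Matrix

variable {n R : Type*} [Fintype n] [CommRing R]

theorem linearIndependent_of_trace_mul_transpose_eq [NoZeroDivisors R] {ι : Type*} [Fintype ι]
    [DecidableEq ι] {v : ι → Matrix n n R} {c : R} (hc : c ≠ 0)
    (hv : ∀ i j, trace (v i * (v j)ᵀ) = if i = j then c else 0) : LinearIndependent R v := by
  refine Fintype.linearIndependent_iff.mpr fun g hg j => ?_
  have h := congrArg (fun A => trace (A * (v j)ᵀ)) hg
  simp only [Finset.sum_mul, trace_sum, smul_mul_assoc, trace_smul, hv, smul_eq_mul, mul_ite,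
    mul_zero, Finset.sum_ite_eq', Finset.mem_univ, if_true, zero_mul, trace_zero] at h
  exact (mul_eq_zero.mp h).resolve_right hc

variable [DecidableEq n]

theorem trace_pow_mul_transpose_pow_of_le {M : Matrix n n R} (hM : M * Mᵀ = 1) {i j : ℕ}
    (hji : j ≤ i) : trace (M ^ i * (M ^ j)ᵀ) = trace (M ^ (i - j)) := by
  obtain ⟨k, rfl⟩ := Nat.exists_eq_add_of_le' hji
  have hcomm : Commute M Mᵀ := hM.trans (mul_eq_one_comm.mp hM).symm
  rw [Nat.add_sub_cancel, pow_add, mul_assoc, transpose_pow, ← hcomm.mul_pow, hM, one_pow,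
    mul_one]

theorem trace_pow_mul_transpose_pow {M : Matrix n n R} (hM : M * Mᵀ = 1) {d : ℕ}
    (htr : ∀ k, 0 < k → k < d → trace (M ^ k) = 0) (i j : Fin d) :
    trace (M ^ (i : ℕ) * (M ^ (j : ℕ))ᵀ) = if i = j then (Fintype.card n : R) else 0 := by
  have key : ∀ a b : Fin d, b ≤ a →
      trace (M ^ (a : ℕ) * (M ^ (b : ℕ))ᵀ) = if a = b then (Fintype.card n : R) else 0 := by
    intro a b hba
    rw [trace_pow_mul_transpose_pow_of_le hM hba]
    split_ifs with hab
    · simp [hab]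
    · exact htr _ (by omega) (by omega)
  rcases le_total j i with hji | hij
  · exact key i j hji
  · rw [← trace_transpose, transpose_mul, transpose_transpose, key j i hij]
    exact if_congr eq_comm rfl rfl

theorem linearIndependent_pow_of_mul_transpose_eq_one [NoZeroDivisors R] {M : Matrix n n R}
    (hM : M * Mᵀ = 1) (hn : (Fintype.card n : R) ≠ 0) {d : ℕ}
    (htr : ∀ k, 0 < k → k < d → trace (M ^ k) = 0) :
    LinearIndependent R fun i : Fin d => M ^ (i : ℕ) :=
  linearIndependent_of_trace_mul_transpose_eq hn (trace_pow_mul_transpose_pow hM htr)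

theorem charpoly_eq_of_aeval_eq_zero [Nonempty n] [Nontrivial R] {M : Matrix n n R} {p : R[X]}
    (hp : p.IsMonicOfDegree (Fintype.card n)) (hMp : aeval M p = 0)
    (hind : LinearIndependent R fun i : Fin (Fintype.card n) => M ^ (i : ℕ)) :
    M.charpoly = p := by
  set q := M.charpoly - p
  have hq : q.natDegree < Fintype.card n :=
    IsMonicOfDegree.natDegree_sub_lt Fintype.card_ne_zero
      ⟨M.charpoly_natDegree_eq_dim, M.charpoly_monic⟩ hp
  have hroot : aeval M q = 0 := by simp [q, aeval_self_charpoly, hMp]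
  have hcoeff : ∀ i : Fin (Fintype.card n), q.coeff i = 0 := by
    rw [aeval_eq_sum_range' hq, Finset.sum_range] at hroot
    exact Fintype.linearIndependent_iff.mp hind _ hroot
  suffices q = 0 from sub_eq_zero.mp this
  rw [q.as_sum_range' _ hq, Finset.sum_range]
  simp [hcoeff]

end Matrix

def hadamard8 : Matrix (Fin 8) (Fin 8) ℤ :=
  !![1, 1, 1, 1, -1, -1, -1, -1;
     -1, 1, 1, -1, -1, 1, 1, -1;
     -1, -1, 1, 1, 1, 1, -1, -1;
     1, -1, 1, -1, 1, -1, 1, -1;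
     1, -1, 1, -1, -1, 1, -1, 1;
     -1, -1, 1, 1, -1, -1, 1, 1;
     -1, 1, 1, -1, 1, -1, -1, 1;
     1, 1, 1, 1, 1, 1, 1, 1]

theorem hadamard8_apply_eq_one_or_eq_neg_one (i j : Fin 8) :
    hadamard8 i j = 1 ∨ hadamard8 i j = -1 := by
  fin_cases i <;> fin_cases j <;> decide

theorem hadamard8_mul_transpose : hadamard8 * hadamard8ᵀ = 8 := by decide

theorem trace_hadamard8_pow : ∀ k ∈ Finset.Ioo 0 8, Matrix.trace (hadamard8 ^ k) = 0 := by decide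

theorem hadamard8_pow_eight : hadamard8 ^ 8 = -4096 := by decide

section RealHadamard8

local notation "H" => RingHom.mapMatrix (Int.castRingHom ℝ) hadamard8

theorem mapMatrix_hadamard8 :
    H = !![1, 1, 1, 1, -1, -1, -1, -1;
           -1, 1, 1, -1, -1, 1, 1, -1;
           -1, -1, 1, 1, 1, 1, -1, -1;
           1, -1, 1, -1, 1, -1, 1, -1;
           1, -1, 1, -1, -1, 1, -1, 1;
           -1, -1, 1, 1, -1, -1, 1, 1;
           -1, 1, 1, -1, 1, -1, -1, 1;
           1, 1, 1, 1, 1, 1, 1, 1] := by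
  ext i j
  fin_cases i <;> fin_cases j <;> simp [hadamard8]

theorem mapMatrix_hadamard8_mul_transpose : H * Hᵀ = (8 : ℝ) • 1 := by
  rw [← Algebra.algebraMap_eq_smul_one, map_ofNat, ← map_ofNat (Int.castRingHom ℝ).mapMatrix 8,
    ← hadamard8_mul_transpose, map_mul]
  rfl

theorem isHadamard_mapMatrix_hadamard8 : IsHadamard H := by
  refine ⟨fun i j => ?_, ?_⟩
  · rcases hadamard8_apply_eq_one_or_eq_neg_one i j with h | h <;> simp [h]
  · rw [mapMatrix_hadamard8_mul_transpose, Fintype.card_fin, Nat.cast_ofNat]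

theorem inv_sqrt_eight_sq : (Real.sqrt 8)⁻¹ ^ 2 = 8⁻¹ := by
  rw [inv_pow, Real.sq_sqrt (by norm_num)]

theorem normalized_hadamard8_mul_transpose :
    ((Real.sqrt 8)⁻¹ • H) * ((Real.sqrt 8)⁻¹ • H)ᵀ = 1 := by
  rw [Matrix.transpose_smul, smul_mul_smul_comm, ← sq, inv_sqrt_eight_sq,
    mapMatrix_hadamard8_mul_transpose, smul_smul, inv_mul_cancel₀ (by norm_num),
    one_smul]

theorem trace_normalized_hadamard8_pow {k : ℕ} (hk₀ : 0 < k) (hk : k < 8) :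
    Matrix.trace (((Real.sqrt 8)⁻¹ • H) ^ k) = 0 := by
  rw [_root_.smul_pow, Matrix.trace_smul, ← map_pow, RingHom.mapMatrix_apply,
    ← AddMonoidHom.map_trace, trace_hadamard8_pow k (Finset.mem_Ioo.mpr ⟨hk₀, hk⟩), map_zero,
    smul_zero]

theorem aeval_normalized_hadamard8 : aeval ((Real.sqrt 8)⁻¹ • H) (X ^ 8 + 1 : ℝ[X]) = 0 := by
  rw [map_add, map_pow, aeval_X, map_one, _root_.smul_pow, ← map_pow, hadamard8_pow_eight,
    show (Real.sqrt 8)⁻¹ ^ 8 = (8⁻¹ : ℝ) ^ 4 by rw [← inv_sqrt_eight_sq, ← pow_mul],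
    map_neg, map_ofNat, ← map_ofNat (algebraMap ℝ (Matrix (Fin 8) (Fin 8) ℝ)) 4096,
    Algebra.algebraMap_eq_smul_one, smul_neg, smul_smul]
  norm_num

end RealHadamard8

/-- The explicit `8 × 8` matrix `H` below is a real Hadamard matrix of order `8`
and the characteristic polynomial of `8^{-1/2} • H` is `X ^ 8 + 1`; equivalently,
every eigenvalue of `H` is a primitive 16-th root of unity times `√8`. -/
theorem stmt_18 :
    IsHadamard (!![1, 1, 1, 1, -1, -1, -1, -1;
                   -1, 1, 1, -1, -1, 1, 1, -1;
                   -1, -1, 1, 1, 1, 1, -1, -1;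
                   1, -1, 1, -1, 1, -1, 1, -1;
                   1, -1, 1, -1, -1, 1, -1, 1;
                   -1, -1, 1, 1, -1, -1, 1, 1;
                   -1, 1, 1, -1, 1, -1, -1, 1;
                   1, 1, 1, 1, 1, 1, 1, 1] : Matrix (Fin 8) (Fin 8) ℝ) ∧
    Matrix.charpoly
        ((Real.sqrt 8)⁻¹ •
          (!![1, 1, 1, 1, -1, -1, -1, -1;
              -1, 1, 1, -1, -1, 1, 1, -1;
              -1, -1, 1, 1, 1, 1, -1, -1;
              1, -1, 1, -1, 1, -1, 1, -1;
              1, -1, 1, -1, -1, 1, -1, 1;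
              -1, -1, 1, 1, -1, -1, 1, 1;
              -1, 1, 1, -1, 1, -1, -1, 1;
              1, 1, 1, 1, 1, 1, 1, 1] : Matrix (Fin 8) (Fin 8) ℝ)) =
      Polynomial.X ^ 8 + 1 := by
  rw [← mapMatrix_hadamard8]
  refine ⟨isHadamard_mapMatrix_hadamard8, ?_⟩
  have hind := Matrix.linearIndependent_pow_of_mul_transpose_eq_one
    normalized_hadamard8_mul_transpose (by simp) fun _ => trace_normalized_hadamard8_pow
  exact Matrix.charpoly_eq_of_aeval_eq_zero ((isMonicOfDegree_X_pow ℝ 8).add_right (by simp))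
    aeval_normalized_hadamard8 hind
end
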